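/- arXiv:2303.18033 — 6 statements merged into one kernel-verified Lean document; each statement's English description precedes it below -/
import Mathlib

section
/- Let C ⊆ ℝⁿ be a cone and f : C → ℝ a convex function that is positively homogeneous of degree m ≥ 1 (i.e., f(λx) = λ^m f(x) for all x ∈ C \ {0} and λ ≥ 0) and nonnegative. Then f is (1/m)-convex, i.e., f^(1/m) is convex on C. -/
/-!
The root `g = f ^ (1 / m)` has the same sublevel sets as `f` up to reparametrisation, so it is
quasiconvex, and it is positively homogeneous of degree one. Such a nonnegative function is the
gauge of its unit sublevel set, hence convex: for `ε > 0` the points `x / (g x + ε)` and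
`y / (g y + ε)` lie in that convex set, and `a • x + b • y` is `a (g x + ε) + b (g y + ε)` times a
convex combination of them.
-/

theorem Set.Subsingleton.convexOn {E β : Type*} [AddCommGroup E] [Module ℝ E]
    [AddCommMonoid β] [PartialOrder β] [Module ℝ β] {s : Set E} (hs : s.Subsingleton) (f : E → β) :
    ConvexOn ℝ s f :=
  ⟨hs.convex, fun x hx y hy a b _ _ hab => by
    rw [hs hx hy, ← add_smul, ← add_smul, hab, one_smul, one_smul]⟩

theorem QuasiconvexOn.rpow {E : Type*} [AddCommGroup E] [Module ℝ E] {s : Set E} {f : E → ℝ}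
    (hf : QuasiconvexOn ℝ s f) (hf_nonneg : ∀ x ∈ s, 0 ≤ f x) {q : ℝ} (hq : 0 ≤ q) :
    QuasiconvexOn ℝ s (fun x => f x ^ q) := by
  refine quasiconvexOn_iff_le_max.2 ⟨hf.convex, fun x hx y hy a b ha hb hab => ?_⟩
  have hz := (quasiconvexOn_iff_le_max.1 hf).2 hx hy ha hb hab
  have hz_nonneg := hf_nonneg _ (hf.convex hx hy ha hb hab)
  rcases le_total (f x) (f y) with h | h
  · rw [max_eq_right h] at hz
    exact (Real.rpow_le_rpow hz_nonneg hz hq).trans (le_max_right _ _)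
  · rw [max_eq_left h] at hz
    exact (Real.rpow_le_rpow hz_nonneg hz hq).trans (le_max_left _ _)

theorem QuasiconvexOn.convexOn_of_homogeneous {E : Type*} [AddCommGroup E] [Module ℝ E]
    {C : Set E} {g : E → ℝ} (hg : QuasiconvexOn ℝ C g)
    (hcone : ∀ x ∈ C, ∀ c : ℝ, 0 < c → c • x ∈ C) (hg_nonneg : ∀ x ∈ C, 0 ≤ g x)
    (hhom : ∀ x ∈ C, ∀ c : ℝ, 0 < c → g (c • x) = c * g x) : ConvexOn ℝ C g := by
  refine convexOn_iff_forall_pos.2 ⟨hg.convex, fun x hx y hy a b ha hb hab => ?_⟩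
  have mem_unit_sublevel : ∀ z ∈ C, ∀ ε : ℝ, 0 < ε →
      (g z + ε)⁻¹ • z ∈ {w ∈ C | g w ≤ 1} := fun z hz ε hε => by
    have hpos : 0 < g z + ε := by linarith [hg_nonneg z hz]
    refine ⟨hcone z hz _ (inv_pos.2 hpos), ?_⟩
    rw [hhom z hz _ (inv_pos.2 hpos), inv_mul_le_one₀ hpos]
    linarith
  refine le_of_forall_pos_le_add fun ε hε => ?_
  set s := g x + ε
  set t := g y + ε
  have hs : 0 < s := by linarith [hg_nonneg x hx]
  have ht : 0 < t := by linarith [hg_nonneg y hy]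
  set D := a * s + b * t
  have hD : 0 < D := by positivity
  have hweights : a * s / D + b * t / D = 1 := by rw [← add_div, div_self hD.ne']
  have hcomb : (a * s / D) • (s⁻¹ • x) + (b * t / D) • (t⁻¹ • y) = D⁻¹ • (a • x + b • y) := by
    simp only [smul_smul, smul_add]
    congr 2 <;> field_simp
  have hunit := hg 1 (mem_unit_sublevel x hx ε hε) (mem_unit_sublevel y hy ε hε)
    (by positivity) (by positivity) hweights
  rw [hcomb] at hunit
  have hz : a • x + b • y ∈ C := hg.convex hx hy ha.le hb.le hab
  calc g (a • x + b • y) = D * g (D⁻¹ • (a • x + b • y)) := by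
        rw [hhom _ hz _ (inv_pos.2 hD), ← mul_assoc, mul_inv_cancel₀ hD.ne', one_mul]
    _ ≤ D := mul_le_of_le_one_right hD.le hunit.2
    _ = a • g x + b • g y + ε := by
        simp only [smul_eq_mul, D, s, t]
        linear_combination ε * hab

theorem stmt0 (n m : ℕ) (hm : 1 ≤ m)
    (C : Set (EuclideanSpace ℝ (Fin n)))
    (hcone : ∀ x ∈ C, ∀ c : ℝ, 0 ≤ c → c • x ∈ C)
    (f : EuclideanSpace ℝ (Fin n) → ℝ)
    (hconv : ConvexOn ℝ C f)
    (hnonneg : ∀ x ∈ C, 0 ≤ f x)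
    (hhom : ∀ x ∈ C, x ≠ 0 → ∀ c : ℝ, 0 ≤ c → f (c • x) = c ^ m * f x) :
    ConvexOn ℝ C (fun x => f x ^ ((1 : ℝ) / m)) := by
  rcases C.subsingleton_or_nontrivial with hsub | hnontriv
  · exact hsub.convexOn _
  have hm0 : m ≠ 0 := by omega
  -- A nonzero point of the cone forces `f 0 = 0`, which extends homogeneity to the apex.
  have hf_zero : f 0 = 0 := by
    obtain ⟨y, hy, hy0⟩ := hnontriv.exists_ne 0
    simpa [zero_pow hm0] using hhom y hy hy0 0 le_rfl
  have hroot_hom : ∀ x ∈ C, ∀ c : ℝ, 0 < c →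
      f (c • x) ^ ((1 : ℝ) / m) = c * f x ^ ((1 : ℝ) / m) := by
    intro x hx c hc
    have hfx : f (c • x) = c ^ m * f x := by
      rcases eq_or_ne x 0 with rfl | hx0
      · simp [hf_zero]
      · exact hhom x hx hx0 c hc.le
    rw [hfx, Real.mul_rpow (by positivity) (hnonneg x hx), one_div, ← Real.rpow_natCast,
      Real.rpow_rpow_inv hc.le (by exact_mod_cast hm0)]
  exact (hconv.quasiconvexOn.rpow hnonneg (by positivity)).convexOn_of_homogeneous
    (fun x hx c hc => hcone x hx c hc.le) (fun x hx => Real.rpow_nonneg (hnonneg x hx) _) hroot_hom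
end

section
/- Let C ⊆ ℝⁿ be a relatively open convex set and (f_i) a sequence of convex functions C → ℝ. Let X ⊆ C be dense in C. If (f_i) converges pointwise on X, then (f_i) converges pointwise on all of C to a convex function f : C → ℝ, and the convergence is uniform on each compact subset of C. -/
/-!
Passing to the affine span of `C`, we may assume `C` is open. The points of `C` at which `(f i)`
is bounded above form a convex set containing the dense set `X`, hence (in finite dimension) all
of `C`; Jensen's inequality over a small simplex around a point makes this bound locally uniform.
Reflecting through a nearby point of `X`, where the `f i` are bounded below, gives a uniform lower
bound, so near every point the `f i` are uniformly bounded, hence uniformly Lipschitz. An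
equicontinuous sequence that converges on a dense set converges everywhere, uniformly on compact
sets, and convexity passes to the pointwise limit.
-/

open Filter Metric Set Topology

theorem ConvexOn.two_mul_le_add {E : Type*} [AddCommGroup E] [Module ℝ E] {s : Set E}
    {f : E → ℝ} (hf : ConvexOn ℝ s f) {x v : E} (h₁ : x + v ∈ s) (h₂ : x - v ∈ s) :
    2 * f x ≤ f (x + v) + f (x - v) := by
  have h := hf.2 h₁ h₂ (by norm_num : (0 : ℝ) ≤ 1 / 2) (by norm_num : (0 : ℝ) ≤ 1 / 2)
    (by norm_num)
  have hx : (1 / 2 : ℝ) • (x + v) + (1 / 2 : ℝ) • (x - v) = x := by module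
  rw [hx, smul_eq_mul, smul_eq_mul] at h
  linarith

theorem convexOn_of_tendsto {ι E : Type*} [AddCommGroup E] [Module ℝ E] {s : Set E}
    {l : Filter ι} [l.NeBot] {F : ι → E → ℝ} {f : E → ℝ} (hF : ∀ i, ConvexOn ℝ s (F i))
    (h : ∀ x ∈ s, Tendsto (F · x) l (𝓝 (f x))) : ConvexOn ℝ s f := by
  have : Nonempty ι := l.nonempty_of_neBot
  have hs := (hF (Classical.arbitrary ι)).1
  refine ⟨hs, fun x hx y hy a b ha hb hab => ?_⟩
  exact le_of_tendsto_of_tendsto (h _ (hs hx hy ha hb hab))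
    (((h x hx).const_smul a).add ((h y hy).const_smul b))
    (Eventually.of_forall fun j => (hF j).2 hx hy ha hb hab)

theorem EquicontinuousAt.cauchySeq_of_mem_closure {ι β α : Type*} [SemilatticeSup ι]
    [Nonempty ι] [TopologicalSpace β] [PseudoMetricSpace α] {F : ι → β → α} {s : Set β} {x : β}
    (hF : EquicontinuousAt F x) (hx : x ∈ closure s) (hs : ∀ y ∈ s, CauchySeq (F · y)) :
    CauchySeq (F · x) := by
  refine Metric.cauchySeq_iff'.2 fun ε hε => ?_
  obtain ⟨y, hxy, hy⟩ :=
    mem_closure_iff_nhds.1 hx _ (Metric.equicontinuousAt_iff_right.1 hF (ε / 3) (by positivity))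
  obtain ⟨N, hN⟩ := Metric.cauchySeq_iff'.1 (hs y hy) (ε / 3) (by positivity)
  refine ⟨N, fun n hn => ?_⟩
  calc dist (F n x) (F N x)
      ≤ dist (F n x) (F n y) + dist (F n y) (F N y) + dist (F N y) (F N x) :=
        dist_triangle4 _ _ _ _
    _ < ε / 3 + ε / 3 + ε / 3 := by
        gcongr
        · exact hxy n
        · exact hN n hn
        · rw [dist_comm]; exact hxy N
    _ = ε := by ring

theorem EquicontinuousOn.tendstoUniformlyOn_of_tendsto {ι X α : Type*} [TopologicalSpace X]
    [UniformSpace α] {F : ι → X → α} {f : X → α} {l : Filter ι} {K : Set X}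
    (hK : IsCompact K) (hF : EquicontinuousOn F K) (h : ∀ x ∈ K, Tendsto (F · x) l (𝓝 (f x))) :
    TendstoUniformlyOn F f l K := by
  have := (EquicontinuousOn.tendsto_uniformOnFun_iff_pi' (𝔖 := {K}) (by simpa) (by simpa) l f).2
    (tendsto_pi_nhds.2 fun y => h y (by simpa using y.2))
  exact UniformOnFun.tendsto_iff_tendstoUniformlyOn.1 this K rfl

theorem Convex.subset_interior_of_subset_closure {E : Type*} [NormedAddCommGroup E]
    [NormedSpace ℝ E] [FiniteDimensional ℝ E] {A U : Set E} (hA : Convex ℝ A) (hU : IsOpen U)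
    (hUA : U ⊆ closure A) : U ⊆ interior A := by
  rcases U.eq_empty_or_nonempty with rfl | hne
  · exact empty_subset _
  have hspan : affineSpan ℝ A = ⊤ := by
    refine top_unique <| hU.affineSpan_eq_top hne ▸ affineSpan_le.2 ?_
    exact hUA.trans <| closure_minimal (subset_affineSpan ℝ A)
      (AffineSubspace.closed_of_finiteDimensional _)
  rw [← hA.interior_closure_eq_interior_of_nonempty_interior
    (hA.interior_nonempty_iff_affineSpan_eq_top.2 hspan)]
  exact interior_maximal hUA hU

section FamilyOfConvexFunctions

variable {ι E : Type*} [NormedAddCommGroup E] [NormedSpace ℝ E] {C X : Set E} {f : ι → E → ℝ}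

theorem convex_setOf_bddAbove_range (hC : Convex ℝ C) (hf : ∀ i, ConvexOn ℝ C (f i)) :
    Convex ℝ {x ∈ C | BddAbove (range fun i => f i x)} := by
  rintro x ⟨hxC, M, hM⟩ y ⟨hyC, N, hN⟩ a b ha hb hab
  refine ⟨hC hxC hyC ha hb hab, a * M + b * N, ?_⟩
  rintro _ ⟨i, rfl⟩
  calc f i (a • x + b • y) ≤ a * f i x + b * f i y := (hf i).2 hxC hyC ha hb hab
    _ ≤ a * M + b * N := by gcongr <;> [exact hM ⟨i, rfl⟩; exact hN ⟨i, rfl⟩]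

theorem eventually_two_mul_sub_le (hf : ∀ i, ConvexOn ℝ C (f i)) {x : E} (hC : C ∈ 𝓝 x)
    {M : ℝ} (hM : ∀ᶠ y in 𝓝 x, ∀ i, f i y ≤ M) :
    ∀ᶠ y in 𝓝 x, ∀ i, 2 * f i x - M ≤ f i y := by
  have hρ : Tendsto (fun y => x - (y - x)) (𝓝 x) (𝓝 x) :=
    (by fun_prop : Continuous fun y => x - (y - x)).tendsto' x x (by simp)
  filter_upwards [hC, hρ.eventually_mem hC, hρ.eventually hM] with y hy hy' hMy i
  have := (hf i).two_mul_le_add (v := y - x) (by simpa using hy) hy'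
  rw [add_sub_cancel] at this
  linarith [hMy i]

theorem exists_eventually_abs_le (hf : ∀ i, ConvexOn ℝ C (f i)) {x : E} (hC : C ∈ 𝓝 x)
    {M : ℝ} (hM : ∀ᶠ y in 𝓝 x, ∀ i, f i y ≤ M) (hB : BddBelow (range fun i => f i x)) :
    ∃ M', ∀ᶠ y in 𝓝 x, ∀ i, |f i y| ≤ M' := by
  obtain ⟨B, hB⟩ := hB
  refine ⟨max M (M - 2 * B), ?_⟩
  filter_upwards [hM, eventually_two_mul_sub_le hf hC hM] with y hMy hBy i
  rw [abs_le]
  constructor <;> linarith [hMy i, hBy i, hB ⟨i, rfl⟩, le_max_left M (M - 2 * B),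
    le_max_right M (M - 2 * B)]

theorem equicontinuousAt_of_eventually_abs_le (hf : ∀ i, ConvexOn ℝ C (f i)) {x : E}
    (hC : C ∈ 𝓝 x) {M : ℝ} (hM : ∀ᶠ y in 𝓝 x, ∀ i, |f i y| ≤ M) : EquicontinuousAt f x := by
  obtain ⟨r, hr, hball⟩ := Metric.mem_nhds_iff.1 (inter_mem hC hM)
  have hlip i := ConvexOn.lipschitzOnWith_of_abs_le
    ((hf i).subset (fun y hy => (hball hy).1) (convex_ball x r)) (half_pos hr)
    fun y hy => (hball hy).2 i
  have hr' : 0 < r - r / 2 := by linarith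
  have := (LipschitzOnWith.uniformEquicontinuousOn f _ hlip).equicontinuousOn x (mem_ball_self hr')
  simpa only [EquicontinuousWithinAt, EquicontinuousAt, nhdsWithin_eq_nhds.2 (ball_mem_nhds x hr')]
    using this

variable [FiniteDimensional ℝ E]

theorem bddAbove_range_of_subset_closure (hC : Convex ℝ C) (hCo : IsOpen C)
    (hf : ∀ i, ConvexOn ℝ C (f i)) (hX : X ⊆ C) (hXd : C ⊆ closure X)
    (hbdd : ∀ x ∈ X, BddAbove (range fun i => f i x)) {x : E} (hx : x ∈ C) :
    BddAbove (range fun i => f i x) :=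
  (interior_subset (((convex_setOf_bddAbove_range hC hf).subset_interior_of_subset_closure hCo
    (hXd.trans (closure_mono fun y hy => ⟨hX hy, hbdd y hy⟩))) hx)).2

theorem exists_eventually_le_of_bddAbove (hf : ∀ i, ConvexOn ℝ C (f i)) {x : E}
    (hC : C ∈ 𝓝 x) (hbdd : ∀ y ∈ C, BddAbove (range fun i => f i y)) :
    ∃ M, ∀ᶠ y in 𝓝 x, ∀ i, f i y ≤ M := by
  obtain ⟨b, hxb, hbC⟩ := exists_mem_interior_convexHull_affineBasis hC
  have hb j : b j ∈ C := hbC (subset_convexHull ℝ _ (mem_range_self j))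
  choose M hM using fun j => hbdd (b j) (hb j)
  obtain ⟨M', hM'⟩ := Finite.bddAbove_range M
  refine ⟨M', Filter.mem_of_superset (mem_interior_iff_mem_nhds.1 hxb) fun y hy i => ?_⟩
  obtain ⟨_, ⟨j, rfl⟩, hj⟩ := (hf i).exists_ge_of_mem_convexHull (range_subset_iff.2 hb) hy
  exact hj.trans ((hM j ⟨i, rfl⟩).trans (hM' ⟨j, rfl⟩))

theorem bddBelow_range_of_subset_closure (hf : ∀ i, ConvexOn ℝ C (f i)) (hCo : IsOpen C)
    (hXd : C ⊆ closure X) (hbddAbove : ∀ y ∈ C, BddAbove (range fun i => f i y))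
    (hbddBelow : ∀ y ∈ X, BddBelow (range fun i => f i y)) {x : E} (hx : x ∈ C) :
    BddBelow (range fun i => f i x) := by
  obtain ⟨M, hM⟩ := exists_eventually_le_of_bddAbove hf (hCo.mem_nhds hx) hbddAbove
  have hρ : Tendsto (fun p => p + (p - x)) (𝓝 x) (𝓝 x) :=
    (by fun_prop : Continuous fun p => p + (p - x)).tendsto' x x (by simp)
  obtain ⟨p, ⟨hpC, hpM⟩, hpX⟩ := mem_closure_iff_nhds.1 (hXd hx) _
    ((hρ.eventually_mem (hCo.mem_nhds hx)).and (hρ.eventually hM))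
  obtain ⟨B, hB⟩ := hbddBelow p hpX
  refine ⟨2 * B - M, ?_⟩
  rintro _ ⟨i, rfl⟩
  have := (hf i).two_mul_le_add (v := p - x) hpC (by simpa using hx)
  rw [sub_sub_cancel] at this
  linarith [hB ⟨i, rfl⟩, hpM i]

end FamilyOfConvexFunctions

theorem ConvexOn.exists_tendstoUniformlyOn_of_isOpen {E : Type*} [NormedAddCommGroup E]
    [NormedSpace ℝ E] [FiniteDimensional ℝ E] {C X : Set E} (hCo : IsOpen C) (hX : X ⊆ C)
    (hXd : C ⊆ closure X) {f : ℕ → E → ℝ} (hf : ∀ i, ConvexOn ℝ C (f i))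
    (hlim : ∀ x ∈ X, ∃ L, Tendsto (fun i => f i x) atTop (𝓝 L)) :
    ∃ g : E → ℝ, ConvexOn ℝ C g ∧ (∀ x ∈ C, Tendsto (fun i => f i x) atTop (𝓝 (g x))) ∧
      ∀ K ⊆ C, IsCompact K → TendstoUniformlyOn f g atTop K := by
  have hbddAbove : ∀ x ∈ C, BddAbove (range fun i => f i x) :=
    fun x => bddAbove_range_of_subset_closure (hf 0).1 hCo hf hX hXd fun y hy =>
      let ⟨_, hL⟩ := hlim y hy; hL.bddAbove_range
  have hbddBelow : ∀ x ∈ C, BddBelow (range fun i => f i x) :=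
    fun x => bddBelow_range_of_subset_closure hf hCo hXd hbddAbove fun y hy =>
      let ⟨_, hL⟩ := hlim y hy; hL.bddBelow_range
  have hequi : ∀ x ∈ C, EquicontinuousAt f x := fun x hx => by
    obtain ⟨M, hM⟩ := exists_eventually_le_of_bddAbove hf (hCo.mem_nhds hx) hbddAbove
    obtain ⟨M', hM'⟩ := exists_eventually_abs_le hf (hCo.mem_nhds hx) hM (hbddBelow x hx)
    exact equicontinuousAt_of_eventually_abs_le hf (hCo.mem_nhds hx) hM'
  have hconv : ∀ x ∈ C, ∃ L, Tendsto (fun i => f i x) atTop (𝓝 L) := fun x hx =>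
    cauchySeq_tendsto_of_complete <| (hequi x hx).cauchySeq_of_mem_closure (hXd hx) fun y hy =>
      let ⟨_, hL⟩ := hlim y hy; hL.cauchySeq
  choose! g hg using hconv
  exact ⟨g, convexOn_of_tendsto hf hg, hg, fun K hKC hK =>
    EquicontinuousOn.tendstoUniformlyOn_of_tendsto hK
      (fun x hx => (hequi x (hKC hx)).equicontinuousWithinAt K) fun x hx => hg x (hKC hx)⟩

theorem exists_affine_retract_of_intrinsicInterior_eq {E : Type*} [NormedAddCommGroup E]
    [InnerProductSpace ℝ E] [FiniteDimensional ℝ E] {C : Set E} (hne : C.Nonempty)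
    (hrel : intrinsicInterior ℝ C = C) :
    ∃ (e : (affineSpan ℝ C).direction →ᴬ[ℝ] E) (r : E →ᴬ[ℝ] (affineSpan ℝ C).direction),
      (∀ v, r (e v) = v) ∧ (∀ x ∈ C, e (r x) = x) ∧ IsOpen (e ⁻¹' C) := by
  set S := affineSpan ℝ C
  obtain ⟨x₀, hx₀⟩ := hne
  have : Nonempty S := ⟨⟨x₀, subset_affineSpan ℝ C hx₀⟩⟩
  let φ := AffineIsometryEquiv.vaddConst ℝ (⟨x₀, subset_affineSpan ℝ C hx₀⟩ : S)
  let e : S.direction →ᴬ[ℝ] E :=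
    ⟨S.subtype.comp φ.toAffineEquiv.toAffineMap, continuous_subtype_val.comp φ.continuous⟩
  let r : E →ᴬ[ℝ] S.direction := φ.symm.toContinuousAffineEquiv.toContinuousAffineMap.comp
    (EuclideanGeometry.orthogonalProjection S)
  have hCS : IsOpen ((↑) ⁻¹' C : Set S) := by
    refine interior_eq_iff_isOpen.1 (subset_antisymm interior_subset fun y hy => ?_)
    obtain ⟨z, hz, hzy⟩ :=
      mem_intrinsicInterior.1 (hrel.symm ▸ hy : (y : E) ∈ intrinsicInterior ℝ C)
    exact Subtype.ext hzy ▸ hz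
  refine ⟨e, r, fun v => ?_, fun x hx => ?_, hCS.preimage φ.continuous⟩
  · change φ.symm (EuclideanGeometry.orthogonalProjection S (φ v)) = v
    simp
  · change ((φ (φ.symm (EuclideanGeometry.orthogonalProjection S x)) : S) : E) = x
    simpa using EuclideanGeometry.orthogonalProjection_eq_self_iff.2 (subset_affineSpan ℝ C hx)

theorem stmt2_general (n : ℕ) (C X : Set (EuclideanSpace ℝ (Fin n)))
    (hrel : intrinsicInterior ℝ C = C)
    (hX : X ⊆ C) (hdense : C ⊆ closure X)
    (f : ℕ → EuclideanSpace ℝ (Fin n) → ℝ)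
    (hconv : ∀ i, ConvexOn ℝ C (f i))
    (hlim : ∀ x ∈ X, ∃ L : ℝ, Filter.Tendsto (fun i => f i x) Filter.atTop (nhds L)) :
    ∃ g : EuclideanSpace ℝ (Fin n) → ℝ, ConvexOn ℝ C g ∧
      (∀ x ∈ C, Filter.Tendsto (fun i => f i x) Filter.atTop (nhds (g x))) ∧
      ∀ K ⊆ C, IsCompact K → TendstoUniformlyOn f g Filter.atTop K := by
  rcases C.eq_empty_or_nonempty with rfl | hne
  · exact ⟨0, convexOn_const 0 convex_empty, by simp, fun K hK _ =>
      subset_empty_iff.1 hK ▸ tendstoUniformlyOn_empty⟩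
  obtain ⟨e, r, hre, her, hopen⟩ := exists_affine_retract_of_intrinsicInterior_eq hne hrel
  have hrC : C ⊆ r ⁻¹' (e ⁻¹' C) := fun x hx => by simp [her x hx, hx]
  have hrX : r '' X ⊆ e ⁻¹' X := image_subset_iff.2 fun x hx => by simp [her x (hX hx), hx]
  have hdense' : e ⁻¹' C ⊆ closure (e ⁻¹' X) := fun v hv => hre v ▸
    closure_mono hrX (image_closure_subset_closure_image r.cont (mem_image_of_mem r (hdense hv)))
  obtain ⟨g, hg, hfg, hunif⟩ := ConvexOn.exists_tendstoUniformlyOn_of_isOpen hopen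
    (preimage_mono hX) hdense' (fun i => (hconv i).comp_affineMap e.toAffineMap)
    fun v hv => hlim _ hv
  refine ⟨g ∘ r, (hg.comp_affineMap r.toAffineMap).subset hrC (hconv 0).1,
    fun x hx => by simpa [her x hx] using hfg (r x) (hrC hx), fun K hKC hK => ?_⟩
  refine (((hunif _ (image_subset_iff.2 (hKC.trans hrC)) (hK.image r.cont)).comp r).mono
    (subset_preimage_image r K)).congr (Eventually.of_forall fun i x hx => ?_)
  simp [her x (hKC hx)]

theorem stmt2 (n : ℕ) (C X : Set (EuclideanSpace ℝ (Fin n)))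
    (hC : Convex ℝ C) (hrel : intrinsicInterior ℝ C = C)
    (hX : X ⊆ C) (hdense : C ⊆ closure X)
    (f : ℕ → EuclideanSpace ℝ (Fin n) → ℝ)
    (hconv : ∀ i, ConvexOn ℝ C (f i))
    (hlim : ∀ x ∈ X, ∃ L : ℝ, Filter.Tendsto (fun i => f i x) Filter.atTop (nhds L)) :
    ∃ g : EuclideanSpace ℝ (Fin n) → ℝ, ConvexOn ℝ C g ∧
      (∀ x ∈ C, Filter.Tendsto (fun i => f i x) Filter.atTop (nhds (g x))) ∧
      ∀ K ⊆ C, IsCompact K → TendstoUniformlyOn f g Filter.atTop K :=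
  stmt2_general n C X hrel hX hdense f hconv hlim
end

section
/- Let K, L ⊆ ℝⁿ be full-dimensional compact convex sets and H ⊆ ℝⁿ a hyperplane through the origin. If the orthogonal projections of K and L onto H coincide, then for every λ ∈ [0,1], vol(λK + (1−λ)L) ≥ λ·vol(K) + (1−λ)·vol(L), where the sum is the Minkowski sum. -/
/-!
Write the space as `ℝ × H`, the first coordinate measured along `u`. Equal projections onto `H`
mean that the fibres `K_y`, `L_y` over a point `y ∈ H` are empty or nonempty simultaneously; when
nonempty they are compact intervals, and the fibre of `λK + (1-λ)L` over `y` contains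
`λK_y + (1-λ)L_y`. In dimension one the length of a Minkowski sum of intervals is the sum of the
lengths, so the fibre inequality is linear in `λ`, and Fubini integrates it over `H`. A Haar
measure on `ℝ × H` is a multiple of the product measure, and the inequality is homogeneous.
-/

open MeasureTheory Pointwise

open Set in
theorem Real.volume_add_volume_le_volume_add {A B : Set ℝ} (hA : IsCompact A) (hB : IsCompact B)
    (hAc : Convex ℝ A) (hBc : Convex ℝ B) (hA₀ : A.Nonempty) (hB₀ : B.Nonempty) :
    volume A + volume B ≤ volume (A + B) := by
  have hIcc : Icc (sInf A + sInf B) (sSup A + sSup B) ⊆ A + B :=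
    (hAc.add hBc).ordConnected.out (add_mem_add (hA.sInf_mem hA₀) (hB.sInf_mem hB₀))
      (add_mem_add (hA.sSup_mem hA₀) (hB.sSup_mem hB₀))
  have hA_le := csInf_le_csSup hA₀ hA.bddBelow hA.bddAbove
  have hB_le := csInf_le_csSup hB₀ hB.bddBelow hB.bddAbove
  calc volume A + volume B
      = volume (Icc (sInf A) (sSup A)) + volume (Icc (sInf B) (sSup B)) := by
        rw [← eq_Icc_of_connected_compact ⟨hA₀, hAc.isPreconnected⟩ hA,
          ← eq_Icc_of_connected_compact ⟨hB₀, hBc.isPreconnected⟩ hB]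
    _ = volume (Icc (sInf A + sInf B) (sSup A + sSup B)) := by
        simp only [Real.volume_Icc]
        rw [← ENNReal.ofReal_add (by linarith) (by linarith)]
        ring_nf
    _ ≤ volume (A + B) := measure_mono hIcc

theorem Real.ofReal_mul_volume_add_le_volume_smul_add_smul {A B : Set ℝ} (hA : IsCompact A)
    (hB : IsCompact B) (hAc : Convex ℝ A) (hBc : Convex ℝ B) (hA₀ : A.Nonempty)
    (hB₀ : B.Nonempty) {a b : ℝ} (ha : 0 ≤ a) (hb : 0 ≤ b) :
    ENNReal.ofReal a * volume A + ENNReal.ofReal b * volume B ≤ volume (a • A + b • B) := by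
  have key := Real.volume_add_volume_le_volume_add (hA.smul a) (hB.smul b) (hAc.smul a)
    (hBc.smul b) hA₀.smul_set hB₀.smul_set
  simpa only [Measure.addHaar_smul_of_nonneg _ ha, Measure.addHaar_smul_of_nonneg _ hb,
    Module.finrank_self, pow_one] using key

theorem Set.nonempty_preimage_prodMk_right_iff {E F : Type*} {S : Set (E × F)} {y : F} :
    ((fun x => (x, y)) ⁻¹' S).Nonempty ↔ y ∈ Prod.snd '' S :=
  ⟨fun ⟨x, hx⟩ => ⟨(x, y), hx, rfl⟩, fun ⟨⟨x, _⟩, hx, hy⟩ => ⟨x, hy ▸ hx⟩⟩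

theorem IsCompact.preimage_prodMk_right {E F : Type*} [TopologicalSpace E] [TopologicalSpace F]
    [T2Space E] [T2Space F] {S : Set (E × F)} (hS : IsCompact S) (y : F) :
    IsCompact ((fun x => (x, y)) ⁻¹' S) :=
  (hS.image continuous_fst).of_isClosed_subset
    (hS.isClosed.preimage (Continuous.prodMk_left y)) fun x hx => ⟨(x, y), hx, rfl⟩

section Fiber

variable {E F : Type*} [AddCommGroup E] [Module ℝ E] [AddCommGroup F] [Module ℝ F]

theorem Convex.preimage_prodMk_right {S : Set (E × F)} (hS : Convex ℝ S) (y : F) :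
    Convex ℝ ((fun x => (x, y)) ⁻¹' S) :=
  hS.affine_preimage ((AffineMap.id ℝ E).prod (AffineMap.const ℝ E y))

theorem Set.smul_add_smul_preimage_prodMk_right_subset (S T : Set (E × F)) (y : F) {a b : ℝ}
    (hab : a + b = 1) :
    a • ((fun x => (x, y)) ⁻¹' S) + b • ((fun x => (x, y)) ⁻¹' T) ⊆
      (fun x => (x, y)) ⁻¹' (a • S + b • T) := by
  rintro _ ⟨_, ⟨s, hs, rfl⟩, _, ⟨t, ht, rfl⟩, rfl⟩
  refine ⟨_, Set.smul_mem_smul_set hs, _, Set.smul_mem_smul_set ht, ?_⟩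
  ext
  · rfl
  · simp [← add_smul, hab]

end Fiber

theorem MeasureTheory.Measure.ofReal_mul_add_le_prod_smul_add_smul {F : Type*}
    [NormedAddCommGroup F] [NormedSpace ℝ F] [MeasurableSpace F] [BorelSpace F]
    [SecondCountableTopology F] (ν : Measure F) [SFinite ν] {S T : Set (ℝ × F)}
    (hS : IsCompact S) (hT : IsCompact T) (hSc : Convex ℝ S) (hTc : Convex ℝ T)
    (hST : Prod.snd '' S = Prod.snd '' T) {l : ℝ} (hl₀ : 0 ≤ l) (hl₁ : l ≤ 1) :
    ENNReal.ofReal l * volume.prod ν S + ENNReal.ofReal (1 - l) * volume.prod ν T ≤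
      volume.prod ν (l • S + (1 - l) • T) := by
  have hM : IsCompact (l • S + (1 - l) • T) := (hS.smul l).add (hT.smul (1 - l))
  have hSm := measurable_measure_prodMk_right (μ := volume) hS.isClosed.measurableSet
  have hTm := measurable_measure_prodMk_right (μ := volume) hT.isClosed.measurableSet
  rw [Measure.prod_apply_symm hS.isClosed.measurableSet,
    Measure.prod_apply_symm hT.isClosed.measurableSet,
    Measure.prod_apply_symm hM.isClosed.measurableSet, ← lintegral_const_mul _ hSm,
    ← lintegral_const_mul _ hTm, ← lintegral_add_left (hSm.const_mul _)]
  refine lintegral_mono fun y => ?_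
  by_cases hSy : ((fun x => (x, y)) ⁻¹' S).Nonempty
  · have hTy : ((fun x => (x, y)) ⁻¹' T).Nonempty := by
      rw [Set.nonempty_preimage_prodMk_right_iff, ← hST]
      exact Set.nonempty_preimage_prodMk_right_iff.1 hSy
    calc _ ≤ volume (l • ((fun x => (x, y)) ⁻¹' S) + (1 - l) • ((fun x => (x, y)) ⁻¹' T)) :=
          Real.ofReal_mul_volume_add_le_volume_smul_add_smul (hS.preimage_prodMk_right y)
            (hT.preimage_prodMk_right y) (hSc.preimage_prodMk_right y)
            (hTc.preimage_prodMk_right y) hSy hTy hl₀ (sub_nonneg.2 hl₁)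
      _ ≤ _ := measure_mono (Set.smul_add_smul_preimage_prodMk_right_subset S T y (by ring))
  · have hTy : ¬((fun x => (x, y)) ⁻¹' T).Nonempty := by
      rwa [Set.nonempty_preimage_prodMk_right_iff, ← hST,
        ← Set.nonempty_preimage_prodMk_right_iff]
    rw [Set.not_nonempty_iff_eq_empty] at hSy hTy
    simp [hSy, hTy]

theorem ContinuousLinearEquiv.map_apply_image {E F : Type*} [NormedAddCommGroup E]
    [NormedSpace ℝ E] [MeasurableSpace E] [BorelSpace E] [NormedAddCommGroup F] [NormedSpace ℝ F]
    [MeasurableSpace F] [BorelSpace F] (Φ : E ≃L[ℝ] F) (μ : Measure E) (A : Set E) :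
    μ.map Φ (Φ '' A) = μ A := by
  rw [show μ.map Φ = μ.map Φ.toHomeomorph.toMeasurableEquiv from rfl, MeasurableEquiv.map_apply]
  simp [Φ.injective.preimage_image]

theorem MeasureTheory.Measure.ofReal_mul_add_le_smul_add_smul_of_image_snd_eq {E F : Type*}
    [NormedAddCommGroup E] [NormedSpace ℝ E] [MeasurableSpace E] [BorelSpace E]
    [NormedAddCommGroup F] [NormedSpace ℝ F] [MeasurableSpace F] [BorelSpace F]
    [FiniteDimensional ℝ F] (μ : Measure E) [μ.IsAddHaarMeasure] (Φ : E ≃L[ℝ] ℝ × F)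
    {K L : Set E} (hK : IsCompact K) (hL : IsCompact L) (hKc : Convex ℝ K) (hLc : Convex ℝ L)
    (hKL : (fun x => (Φ x).2) '' K = (fun x => (Φ x).2) '' L) {l : ℝ} (hl₀ : 0 ≤ l)
    (hl₁ : l ≤ 1) :
    ENNReal.ofReal l * μ K + ENNReal.ofReal (1 - l) * μ L ≤ μ (l • K + (1 - l) • L) := by
  have hprod := ofReal_mul_add_le_prod_smul_add_smul (addHaar : Measure F)
    (hK.image Φ.continuous) (hL.image Φ.continuous) (hKc.linear_image Φ.toLinearMap)
    (hLc.linear_image Φ.toLinearMap) (by simpa only [Set.image_image] using hKL) hl₀ hl₁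
  rw [← Φ.map_apply_image μ K, ← Φ.map_apply_image μ L, ← Φ.map_apply_image μ,
    Set.image_add, image_smul_set, image_smul_set,
    isAddLeftInvariant_eq_smul (μ.map Φ) (volume.prod (addHaar : Measure F))]
  generalize addHaarScalarFactor (μ.map Φ) (volume.prod addHaar) = c
  simp only [smul_apply, ENNReal.smul_def, smul_eq_mul, mul_left_comm _ (c : ENNReal), ← mul_add]
  gcongr

theorem Submodule.exists_continuousLinearEquiv_prod_orthogonalProjectionOnto {E : Type*}
    [NormedAddCommGroup E] [InnerProductSpace ℝ E] [FiniteDimensional ℝ E] (H : Submodule ℝ E)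
    (hH : Module.finrank ℝ Hᗮ = 1) :
    ∃ Φ : E ≃L[ℝ] ℝ × H, ∀ x, (Φ x).2 = H.orthogonalProjectionOnto x :=
  ⟨(((prodEquivOfIsCompl H Hᗮ H.isCompl_orthogonal).symm ≪≫ₗ LinearEquiv.prodComm ℝ H Hᗮ) ≪≫ₗ
      (LinearEquiv.ofFinrankEq Hᗮ ℝ (by rw [hH, Module.finrank_self])).prodCongr
        (LinearEquiv.refl ℝ H)).toContinuousLinearEquiv, fun _ => rfl⟩

theorem stmt3_general (n : ℕ) (K L : Set (EuclideanSpace ℝ (Fin n)))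
    (hKcpt : IsCompact K) (hLcpt : IsCompact L)
    (hKconv : Convex ℝ K) (hLconv : Convex ℝ L)
    (u : EuclideanSpace ℝ (Fin n)) (hu : u ≠ 0)
    (hproj : (fun x => ((Submodule.orthogonalProjection (Submodule.span ℝ {u})ᗮ x : (Submodule.span ℝ {u})ᗮ) :
        EuclideanSpace ℝ (Fin n))) '' K =
      (fun x => ((Submodule.orthogonalProjection (Submodule.span ℝ {u})ᗮ x : (Submodule.span ℝ {u})ᗮ) :
        EuclideanSpace ℝ (Fin n))) '' L)
    (l : ℝ) (hl : l ∈ Set.Icc (0 : ℝ) 1) :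
    l * (volume K).toReal + (1 - l) * (volume L).toReal ≤
      (volume (l • K + (1 - l) • L)).toReal := by
  obtain ⟨Φ, hΦ⟩ := (Submodule.span ℝ {u})ᗮ.exists_continuousLinearEquiv_prod_orthogonalProjectionOnto
    (by rw [Submodule.orthogonal_orthogonal, finrank_span_singleton hu])
  have hKL : (fun x => (Φ x).2) '' K = (fun x => (Φ x).2) '' L := by
    simp only [hΦ]
    exact Subtype.val_injective.image_injective (by simpa only [Set.image_image] using hproj)
  have key := Measure.ofReal_mul_add_le_smul_add_smul_of_image_snd_eq volume Φ hKcpt hLcpt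
    hKconv hLconv hKL hl.1 hl.2
  have hM : IsCompact (l • K + (1 - l) • L) := (hKcpt.smul l).add (hLcpt.smul (1 - l))
  have key_real := ENNReal.toReal_mono hM.measure_lt_top.ne key
  rwa [ENNReal.toReal_add (ENNReal.mul_ne_top ENNReal.ofReal_ne_top hKcpt.measure_lt_top.ne)
      (ENNReal.mul_ne_top ENNReal.ofReal_ne_top hLcpt.measure_lt_top.ne),
    ENNReal.toReal_mul, ENNReal.toReal_mul, ENNReal.toReal_ofReal hl.1,
    ENNReal.toReal_ofReal (sub_nonneg.2 hl.2)] at key_real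

theorem stmt3 (n : ℕ) (K L : Set (EuclideanSpace ℝ (Fin n)))
    (hKcpt : IsCompact K) (hLcpt : IsCompact L)
    (hKconv : Convex ℝ K) (hLconv : Convex ℝ L)
    (hKfull : (interior K).Nonempty) (hLfull : (interior L).Nonempty)
    (u : EuclideanSpace ℝ (Fin n)) (hu : u ≠ 0)
    (hproj : (fun x => ((Submodule.orthogonalProjection (Submodule.span ℝ {u})ᗮ x : (Submodule.span ℝ {u})ᗮ) :
        EuclideanSpace ℝ (Fin n))) '' K =
      (fun x => ((Submodule.orthogonalProjection (Submodule.span ℝ {u})ᗮ x : (Submodule.span ℝ {u})ᗮ) :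
        EuclideanSpace ℝ (Fin n))) '' L)
    (l : ℝ) (hl : l ∈ Set.Icc (0 : ℝ) 1) :
    l * (volume K).toReal + (1 - l) * (volume L).toReal ≤
      (volume (l • K + (1 - l) • L)).toReal :=
  stmt3_general n K L hKcpt hLcpt hKconv hLconv u hu hproj l hl
end

section
/- Let P be a full-dimensional polytope in ℝⁿ (n-dimensional), Q ⊆ relint P a polytope with dim Q = n, and (f_i) a sequence of concave functions P → ℝ such that sup_i ∫_P |f_i| dx = C < ∞. Then there exists a subsequence (f_{k(i)}) that converges uniformly on Q to a concave function f : Q → ℝ. -/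
/-!
A concave function on a polytope is bounded below by its minimum over the vertices and bounded
above around an interior point, hence integrable. For a ball `B = B(x, r)` well inside `P`,
Jensen's inequality gives `f x ≥ ⨍_B f ≥ -C / |B|`; feeding this lower bound into the reflection
inequality `2 f y ≥ f x + f (2 y - x)` and integrating over `y ∈ B` bounds `f x` above by
`3 C / |B|`. So the `f i` are uniformly bounded on a neighbourhood of `Q`, hence uniformly
Lipschitz near `Q`, and Arzelà–Ascoli yields a uniformly convergent subsequence. Concavity passes
to the pointwise limit.
-/

open MeasureTheory Metric Set Filter Topology

section Concave

variable {E : Type*} [AddCommGroup E] [Module ℝ E] {s : Set E} {f : E → ℝ}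

lemma ConcaveOn.apply_add_smul_sub_add_mul_le (hf : ConcaveOn ℝ s f) {x y : E} {t : ℝ}
    (hy : y ∈ s) (ht : 0 ≤ t) (hz : x + t • (x - y) ∈ s) :
    f (x + t • (x - y)) + t * f y ≤ (1 + t) * f x := by
  have ht' : 0 < 1 + t := by linarith
  have hcomb := hf.2 hz hy (by positivity : 0 ≤ 1 / (1 + t)) (by positivity : 0 ≤ t / (1 + t))
    (by field_simp)
  have hx : (1 / (1 + t)) • (x + t • (x - y)) + (t / (1 + t)) • y = x := by
    match_scalars <;> field_simp; ring
  rw [hx, smul_eq_mul, smul_eq_mul] at hcomb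
  have := mul_le_mul_of_nonneg_left hcomb ht'.le
  field_simp at this
  linarith

lemma concaveOn_of_tendsto {ι : Type*} {l : Filter ι} [l.NeBot] {F : ι → E → ℝ} {g : E → ℝ}
    (hs : Convex ℝ s) (hF : ∀ᶠ i in l, ConcaveOn ℝ s (F i))
    (hg : ∀ x ∈ s, Tendsto (fun i => F i x) l (𝓝 (g x))) : ConcaveOn ℝ s g :=
  ⟨hs, fun x hx y hy a b ha hb hab =>
    le_of_tendsto_of_tendsto (((hg x hx).const_smul a).add ((hg y hy).const_smul b))
      (hg _ (hs hx hy ha hb hab)) (hF.mono fun _ hi => hi.2 hx hy ha hb hab)⟩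

end Concave

lemma ConcaveOn.bddAbove_of_bddBelow {E : Type*} [NormedAddCommGroup E] [NormedSpace ℝ E]
    {s : Set E} {f : E → ℝ} (hf : ConcaveOn ℝ s f) (hs : Bornology.IsBounded s) {x₀ : E}
    (hx₀ : x₀ ∈ interior s) (hb : BddBelow (f '' s)) : BddAbove (f '' s) := by
  obtain ⟨m, hm⟩ := hb
  obtain ⟨ε, hε, hball⟩ := Metric.isOpen_iff.1 isOpen_interior x₀ hx₀
  obtain ⟨R, hR, hsR⟩ := hs.subset_closedBall_lt 0 x₀
  set t := ε / (R + 1)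
  have ht : 0 < t := by positivity
  refine ⟨((1 + t) * f x₀ - m) / t, forall_mem_image.2 fun y hy => ?_⟩
  have hz : x₀ + t • (x₀ - y) ∈ s := by
    refine interior_subset (hball (mem_ball_iff_norm.2 ?_))
    have hyR : ‖x₀ - y‖ ≤ R := by simpa [dist_eq_norm'] using hsR hy
    calc ‖x₀ + t • (x₀ - y) - x₀‖ = t * ‖x₀ - y‖ := by
          rw [add_sub_cancel_left, norm_smul, Real.norm_of_nonneg ht.le]
      _ ≤ t * R := by gcongr
      _ < ε := by
          rw [div_mul_eq_mul_div, div_lt_iff₀ (by positivity)]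
          nlinarith
  have := hf.apply_add_smul_sub_add_mul_le hy ht.le hz
  rw [le_div_iff₀ ht]
  linarith [hm (mem_image_of_mem f hz)]

lemma abs_integral_le_integral_abs {α : Type*} [MeasurableSpace α] (μ : Measure α) (f : α → ℝ) :
    |∫ x, f x ∂μ| ≤ ∫ x, |f x| ∂μ := by
  simpa only [Real.norm_eq_abs] using norm_integral_le_integral_norm f

section Haar

variable {E : Type*} [NormedAddCommGroup E] [NormedSpace ℝ E] [FiniteDimensional ℝ E]
  [MeasurableSpace E] [BorelSpace E] (μ : Measure E) [μ.IsAddHaarMeasure] {f : E → ℝ}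

lemma setAverage_closedBall_id (c : E) {r : ℝ} (hr : 0 < r) :
    ⨍ y in closedBall c r, y ∂μ = c := by
  have hreflect : ∫ y in closedBall c r, (c + c - y) ∂μ = ∫ y in closedBall c r, y ∂μ := by
    have hpre : (fun y => c + c - y) ⁻¹' closedBall c r = closedBall c r := by
      ext y
      simp only [mem_preimage, mem_closedBall, dist_eq_norm, ← norm_neg (y - c)]
      congr! 2
      abel
    simpa only [hpre, id] using
      (Measure.measurePreserving_sub_left μ (c + c)).setIntegral_preimage_emb
        (MeasurableEquiv.subLeft (c + c)).measurableEmbedding id (closedBall c r)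
  rw [integral_sub (integrableOn_const (C := c + c) measure_closedBall_lt_top.ne)
    ((continuousOn_id' _).integrableOn_compact (isCompact_closedBall c r)),
    setIntegral_const] at hreflect
  have hintegral : ∫ y in closedBall c r, y ∂μ = μ.real (closedBall c r) • c := by
    linear_combination (norm := module) (-1 / 2 : ℝ) • hreflect
  have hV : μ.real (closedBall c r) ≠ 0 :=
    (ENNReal.toReal_pos (measure_closedBall_pos μ c hr).ne' measure_closedBall_lt_top.ne).ne'
  rw [setAverage_eq, hintegral, smul_smul, inv_mul_cancel₀ hV, one_smul]

lemma ConcaveOn.setAverage_closedBall_le {c : E} {r : ℝ} (hr : 0 < r)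
    (hf : ConcaveOn ℝ (closedBall c r) f) (hfc : ContinuousOn f (closedBall c r)) :
    ⨍ y in closedBall c r, f y ∂μ ≤ f c := by
  have hjensen := hf.le_map_set_average hfc isClosed_closedBall
    (measure_closedBall_pos μ c hr).ne' measure_closedBall_lt_top.ne
    (ae_restrict_mem measurableSet_closedBall)
    ((continuousOn_id' _).integrableOn_compact (isCompact_closedBall c r))
    (hfc.integrableOn_compact (isCompact_closedBall c r))
  rwa [setAverage_closedBall_id μ c hr] at hjensen

lemma ConcaveOn.neg_div_le_of_setIntegral_abs_le {c : E} {r C : ℝ} (hr : 0 < r)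
    (hf : ConcaveOn ℝ (closedBall c r) f) (hfc : ContinuousOn f (closedBall c r))
    (hC : ∫ y in closedBall c r, |f y| ∂μ ≤ C) :
    -(C / μ.real (closedBall c r)) ≤ f c := by
  have hV : 0 < μ.real (closedBall c r) :=
    ENNReal.toReal_pos (measure_closedBall_pos μ c hr).ne' measure_closedBall_lt_top.ne
  have hint : -C ≤ ∫ y in closedBall c r, f y ∂μ :=
    (neg_le_neg hC).trans (neg_le_of_abs_le (abs_integral_le_integral_abs _ f))
  calc -(C / μ.real (closedBall c r))
      ≤ (∫ y in closedBall c r, f y ∂μ) / μ.real (closedBall c r) := by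
        rw [← neg_div]; gcongr
    _ = ⨍ y in closedBall c r, f y ∂μ := by rw [setAverage_eq, smul_eq_mul, div_eq_inv_mul]
    _ ≤ f c := hf.setAverage_closedBall_le μ hr hfc

lemma ConcaveOn.le_sub_of_setIntegral_abs_le {c : E} {r C m : ℝ} (hr : 0 < r)
    (hf : ConcaveOn ℝ (closedBall c (2 * r)) f) (hm : ∀ z ∈ closedBall c (2 * r), m ≤ f z)
    (hfi : IntegrableOn f (closedBall c r) μ) (hC : ∫ y in closedBall c r, |f y| ∂μ ≤ C) :
    f c ≤ 2 * C / μ.real (closedBall c r) - m := by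
  have hmid : ∀ y ∈ closedBall c r, (f c + m) / 2 ≤ f y := by
    intro y hy
    have hz : y + (1 : ℝ) • (y - c) ∈ closedBall c (2 * r) := by
      have hreflect : y + (1 : ℝ) • (y - c) - c = (2 : ℝ) • (y - c) := by module
      rw [mem_closedBall_iff_norm, hreflect, norm_smul, Real.norm_two]
      exact mul_le_mul_of_nonneg_left (mem_closedBall_iff_norm.1 hy) zero_le_two
    have := hf.apply_add_smul_sub_add_mul_le (mem_closedBall_self (by positivity)) zero_le_one hz
    linarith [hm _ hz]
  have hV : 0 < μ.real (closedBall c r) :=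
    ENNReal.toReal_pos (measure_closedBall_pos μ c hr).ne' measure_closedBall_lt_top.ne
  have hlow := setIntegral_ge_of_const_le_real measurableSet_closedBall
    measure_closedBall_lt_top.ne hmid hfi
  have hup := (le_abs_self _).trans ((abs_integral_le_integral_abs _ f).trans hC)
  rw [le_sub_iff_add_le, le_div_iff₀ hV]
  linarith

lemma ConcaveOn.integrableOn_convexHull {S : Finset E}
    (hf : ConcaveOn ℝ (convexHull ℝ (S : Set E)) f) : IntegrableOn f (convexHull ℝ S) μ := by
  have hcompact : IsCompact (convexHull ℝ (S : Set E)) :=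
    S.finite_toSet.isCompact_convexHull (𝕜 := ℝ)
  have hfrontier : μ (frontier (convexHull ℝ (S : Set E))) = 0 :=
    (convex_convexHull ℝ _).addHaar_frontier μ
  rcases (interior (convexHull ℝ (S : Set E))).eq_empty_or_nonempty with hempty | ⟨x₀, hx₀⟩
  · refine IntegrableOn.of_measure_zero ?_
    rw [← measure_interior_of_null_frontier hfrontier, hempty, measure_empty]
  obtain ⟨m, hm⟩ :=
    hf.bddBelow_convexHull (subset_convexHull ℝ _) (S.finite_toSet.image f).bddBelow
  obtain ⟨M, hM⟩ := hf.bddAbove_of_bddBelow hcompact.isBounded hx₀ ⟨m, hm⟩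
  have hmeas : AEStronglyMeasurable f (μ.restrict (convexHull ℝ S)) := by
    rw [← Measure.restrict_congr_set (interior_ae_eq_of_null_frontier hfrontier)]
    exact hf.continuousOn_interior.aestronglyMeasurable isOpen_interior.measurableSet
  refine ⟨hmeas, .restrict_of_bounded (C := max M (-m)) hcompact.measure_lt_top
    (ae_restrict_of_forall_mem hcompact.isClosed.measurableSet fun x hx => ?_)⟩
  rw [Real.norm_eq_abs, abs_le]
  exact ⟨neg_le.1 ((neg_le_neg (hm (mem_image_of_mem f hx))).trans (le_max_right _ _)),
    (hM (mem_image_of_mem f hx)).trans (le_max_left _ _)⟩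

lemma ConcaveOn.abs_le_of_closedBall_subset {s : Set E} {x : E} {r C : ℝ} (hr : 0 < r)
    (hf : ConcaveOn ℝ s f) (hfi : IntegrableOn f s μ) (hC : ∫ y in s, |f y| ∂μ ≤ C)
    (hx : closedBall x (3 * r) ⊆ interior s) :
    |f x| ≤ 3 * C / μ.real (closedBall (0 : E) r) := by
  set V := μ.real (closedBall (0 : E) r)
  have hV : ∀ z, μ.real (closedBall z r) = V := fun z => by
    simp only [V, measureReal_def, Measure.addHaar_closedBall_center]
  have hV0 : 0 < V :=
    ENNReal.toReal_pos (measure_closedBall_pos μ 0 hr).ne' measure_closedBall_lt_top.ne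
  have hC0 : 0 ≤ C := (integral_nonneg fun _ => abs_nonneg _).trans hC
  have hL1 : ∀ z, closedBall z r ⊆ s → ∫ y in closedBall z r, |f y| ∂μ ≤ C := fun z hz =>
    (setIntegral_mono_set hfi.abs (ae_of_all _ fun _ => abs_nonneg _) hz.eventuallyLE).trans hC
  have hlow : ∀ z ∈ closedBall x (2 * r), -(C / V) ≤ f z := by
    intro z hz
    have hzx : closedBall z r ⊆ interior s :=
      (closedBall_subset_closedBall' (by linarith [mem_closedBall.1 hz])).trans hx
    have hzs := hzx.trans interior_subset
    rw [← hV z]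
    exact (hf.subset hzs (convex_closedBall z r)).neg_div_le_of_setIntegral_abs_le μ hr
      (hf.continuousOn_interior.mono hzx) (hL1 z hzs)
  have h2r : closedBall x (2 * r) ⊆ s :=
    (closedBall_subset_closedBall (by linarith)).trans (hx.trans interior_subset)
  have hr' : closedBall x r ⊆ s := (closedBall_subset_closedBall (by linarith)).trans h2r
  have hup := (hf.subset h2r (convex_closedBall _ _)).le_sub_of_setIntegral_abs_le μ hr hlow
    (hfi.mono_set hr') (hL1 x hr')
  rw [hV] at hup
  have hCV : C / V ≤ 3 * C / V := by gcongr; linarith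
  rw [abs_le]
  constructor
  · linarith [hlow x (mem_closedBall_self (by positivity)), neg_div V (3 * C)]
  · linarith [show 2 * C / V - -(C / V) = 3 * C / V by ring]

end Haar

lemma equicontinuousAt_of_lipschitzOnWith {ι X β : Type*} [PseudoMetricSpace X]
    [PseudoMetricSpace β] {F : ι → X → β} {x : X} {U : Set X} (hU : U ∈ 𝓝 x) {K : NNReal}
    (hF : ∀ i, LipschitzOnWith K (F i) U) : EquicontinuousAt F x := by
  have hwithin := (LipschitzOnWith.uniformEquicontinuousOn F K hF).equicontinuousOn x
    (mem_of_mem_nhds hU)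
  intro V hV
  simpa only [nhdsWithin_eq_nhds.2 hU] using hwithin V hV

theorem EquicontinuousOn.exists_strictMono_tendstoUniformlyOn {X β : Type*} [TopologicalSpace X]
    [MetricSpace β] {F : ℕ → X → β} {K : Set X} {S : Set β} (hF : EquicontinuousOn F K)
    (hK : IsCompact K) (hS : IsCompact S) (hFS : ∀ i, ∀ x ∈ K, F i x ∈ S) :
    ∃ φ : ℕ → ℕ, StrictMono φ ∧ ∃ g : X → β, TendstoUniformlyOn (fun i => F (φ i)) g atTop K := by
  have : CompactSpace K := isCompact_iff_compactSpace.mp hK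
  have hequi : Equicontinuous (K.domRestrict ∘ F) := (equicontinuous_restrict_iff F).2 hF
  set G : ℕ → BoundedContinuousFunction K β :=
    fun i => .mkOfCompact ⟨K.domRestrict (F i), hequi.continuous i⟩
  have hrange : Equicontinuous ((↑) : range G → K → β) := by
    convert hequi.comp (fun g : range G => g.2.choose) using 1
    funext g
    exact congrArg DFunLike.coe g.2.choose_spec.symm
  have hcompact := BoundedContinuousFunction.arzela_ascoli S hS (range G)
    (by rintro _ x ⟨i, rfl⟩; exact hFS i x x.2) hrange
  obtain ⟨G', -, φ, hφ, hlim⟩ :=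
    hcompact.isSeqCompact fun i => subset_closure (mem_range_self (f := G) i)
  refine ⟨φ, hφ, Function.extend Subtype.val G' (F 0), ?_⟩
  rw [tendstoUniformlyOn_iff_tendstoUniformly_comp_coe]
  convert BoundedContinuousFunction.tendsto_iff_tendstoUniformly.1 hlim using 1
  · rfl
  · funext x
    exact Subtype.val_injective.extend_apply _ _ x

theorem stmt4_general (n : ℕ) (P Q : Set (EuclideanSpace ℝ (Fin n)))
    (hPpoly : ∃ S : Finset (EuclideanSpace ℝ (Fin n)), P = convexHull ℝ (S : Set _))
    (hQpoly : ∃ S : Finset (EuclideanSpace ℝ (Fin n)), Q = convexHull ℝ (S : Set _))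
    (hQP : Q ⊆ interior P)
    (f : ℕ → EuclideanSpace ℝ (Fin n) → ℝ) (C : ℝ)
    (hconc : ∀ i, ConcaveOn ℝ P (f i))
    (hL1 : ∀ i, (∫ x in P, |f i x|) ≤ C) :
    ∃ k : ℕ → ℕ, StrictMono k ∧ ∃ g : EuclideanSpace ℝ (Fin n) → ℝ,
      ConcaveOn ℝ Q g ∧ TendstoUniformlyOn (fun i => f (k i)) g Filter.atTop Q := by
  have hint : ∀ i, IntegrableOn (f i) P := by
    obtain ⟨S, rfl⟩ := hPpoly
    exact fun i => (hconc i).integrableOn_convexHull volume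
  obtain ⟨hQcompact, hQconvex⟩ : IsCompact Q ∧ Convex ℝ Q := by
    obtain ⟨S, rfl⟩ := hQpoly
    exact ⟨S.finite_toSet.isCompact_convexHull (𝕜 := ℝ), convex_convexHull ℝ _⟩
  obtain ⟨δ, hδ, hQδ⟩ := hQcompact.exists_cthickening_subset_open isOpen_interior hQP
  have hballs : ∀ q ∈ Q, closedBall q δ ⊆ interior P := fun q hq =>
    (closedBall_subset_cthickening hq δ).trans hQδ
  set M := 3 * C / volume.real (closedBall (0 : EuclideanSpace ℝ (Fin n)) (δ / 4))
  have hbound : ∀ i, ∀ q ∈ Q, ∀ a ∈ ball q (δ / 4), |f i a| ≤ M := fun i q hq a ha =>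
    (hconc i).abs_le_of_closedBall_subset volume (by positivity) (hint i) (hL1 i)
      ((closedBall_subset_closedBall' (by linarith [mem_ball.1 ha])).trans (hballs q hq))
  have hlip : ∀ q ∈ Q, ∀ i,
      LipschitzOnWith (2 * M / (δ / 8)).toNNReal (f i) (ball q (δ / 4 - δ / 8)) := by
    intro q hq i
    have hqP : ball q (δ / 4) ⊆ P := ball_subset_closedBall.trans <|
      (closedBall_subset_closedBall (by linarith)).trans <| (hballs q hq).trans interior_subset
    exact ((hconc i).subset hqP (convex_ball q _)).lipschitzOnWith_of_abs_le (by positivity)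
      (hbound i q hq)
  have hequi : EquicontinuousOn f Q := fun q hq =>
    (equicontinuousAt_of_lipschitzOnWith (ball_mem_nhds q (by linarith)) (hlip q hq))
      |>.equicontinuousWithinAt Q
  obtain ⟨k, hk, g, hg⟩ := hequi.exists_strictMono_tendstoUniformlyOn hQcompact
    isCompact_Icc fun i x hx => abs_le.1 (hbound i x hx x (mem_ball_self (by positivity)))
  refine ⟨k, hk, g, concaveOn_of_tendsto hQconvex (.of_forall fun i => ?_)
    (fun x hx => hg.tendsto_at hx), hg⟩
  exact (hconc (k i)).subset (hQP.trans interior_subset) hQconvex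

theorem stmt4 (n : ℕ) (P Q : Set (EuclideanSpace ℝ (Fin n)))
    (hPpoly : ∃ S : Finset (EuclideanSpace ℝ (Fin n)), P = convexHull ℝ (S : Set _))
    (hQpoly : ∃ S : Finset (EuclideanSpace ℝ (Fin n)), Q = convexHull ℝ (S : Set _))
    (hPfull : (interior P).Nonempty) (hQfull : (interior Q).Nonempty)
    (hQP : Q ⊆ interior P)
    (f : ℕ → EuclideanSpace ℝ (Fin n) → ℝ) (C : ℝ)
    (hconc : ∀ i, ConcaveOn ℝ P (f i))
    (hL1 : ∀ i, (∫ x in P, |f i x|) ≤ C) :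
    ∃ k : ℕ → ℕ, StrictMono k ∧ ∃ g : EuclideanSpace ℝ (Fin n) → ℝ,
      ConcaveOn ℝ Q g ∧ TendstoUniformlyOn (fun i => f (k i)) g Filter.atTop Q :=
  stmt4_general n P Q hPpoly hQpoly hQP f C hconc hL1
end

section
/- Let (K_t)_{t∈[0,1]} be a family of full-dimensional convex bodies in ℝⁿ such that for every continuous function f : ℝⁿ → ℝ the map t ↦ ∫_{K_t} f dx is differentiable from the right at t = 0. Then limsup_{t→0⁺} vol(K_t △ K_0)/t < ∞, where △ denotes the symmetric difference. In particular K_t → K_0 in the symmetric difference metric (and hence in the Hausdorff metric) as t → 0⁺. -/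
/-!
The difference quotients `t⁻¹ (∫_{K_t} - ∫_{K_0})` are continuous linear functionals on the Banach
space of bounded continuous functions. Along any sequence `t_k → 0⁺` they converge pointwise, so by
Banach–Steinhaus their operator norms are bounded. By regularity of the measure and Urysohn's
lemma, the operator norm of `∫_A - ∫_B` is at least `vol (A ∆ B)`; hence `vol (K_t ∆ K_0) = O(t)`.
-/

open MeasureTheory Filter Set Topology BoundedContinuousFunction
open scoped symmDiff ENNReal

section SetIntegralCLM

variable {X : Type*} [TopologicalSpace X] [MeasurableSpace X] [OpensMeasurableSpace X]

theorem BoundedContinuousFunction.integrableOn (μ : Measure X) {s : Set X} (hs : μ s ≠ ∞)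
    (f : X →ᵇ ℝ) : IntegrableOn f s μ :=
  have := isFiniteMeasure_restrict.2 hs
  f.integrable _

noncomputable def setIntegralCLM (μ : Measure X) {s : Set X} (hs : μ s ≠ ∞) : (X →ᵇ ℝ) →L[ℝ] ℝ :=
  LinearMap.mkContinuous
    { toFun f := ∫ x in s, f x ∂μ
      map_add' f g := integral_add (f.integrableOn μ hs) (g.integrableOn μ hs)
      map_smul' c f := integral_smul c _ }
    (μ.real s)
    fun f => by
      rw [mul_comm]
      exact norm_setIntegral_le_of_norm_le_const hs.lt_top fun x _ => f.norm_coe_le_norm x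

@[simp]
theorem setIntegralCLM_apply (μ : Measure X) {s : Set X} (hs : μ s ≠ ∞) (f : X →ᵇ ℝ) :
    setIntegralCLM μ hs f = ∫ x in s, f x ∂μ :=
  rfl

end SetIntegralCLM

section Urysohn

variable {X : Type*} [TopologicalSpace X] [NormalSpace X] [MeasurableSpace X] [BorelSpace X]
  {μ : Measure X} [μ.WeaklyRegular] {A B : Set X}

theorem exists_measureReal_sdiff_le_setIntegral_sub (hA : MeasurableSet A) (hB : MeasurableSet B)
    (hAfin : μ A ≠ ∞) (hBfin : μ B ≠ ∞) {ε : ℝ} (hε : 0 < ε) :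
    ∃ g : X →ᵇ ℝ, (∀ x, g x ∈ Icc (0 : ℝ) 1) ∧
      μ.real (A \ B) ≤ (∫ x in A, g x ∂μ) - (∫ x in B, g x ∂μ) + 2 * ε := by
  set S := A \ B
  have hS : MeasurableSet S := hA.diff hB
  have hSfin : μ S ≠ ∞ := measure_ne_top_of_subset sdiff_subset hAfin
  have hε' : ENNReal.ofReal ε ≠ 0 := (ENNReal.ofReal_pos.2 hε).ne'
  obtain ⟨F, hFS, hF, hSF⟩ := hS.exists_isClosed_sdiff_lt hSfin hε'
  obtain ⟨U, hSU, hU, hUfin, hUS⟩ := hS.exists_isOpen_sdiff_lt hSfin hε'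
  obtain ⟨g, hgU, hgF, hg01⟩ := exists_bounded_zero_one_of_closed hU.isClosed_compl hF
    (disjoint_compl_left_iff_subset.2 (hFS.trans hSU))
  refine ⟨g, hg01, ?_⟩
  have hA_ge : μ.real F ≤ ∫ x in A, g x ∂μ := by
    calc μ.real F = ∫ x in A, F.indicator 1 x ∂μ := by
          rw [integral_indicator_one hF.measurableSet, measureReal_restrict_apply hF.measurableSet,
            inter_eq_left.2 (hFS.trans sdiff_subset)]
      _ ≤ ∫ x in A, g x ∂μ := by
          refine setIntegral_mono_on ?_ (g.integrableOn μ hAfin) hA fun x _ => ?_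
          · exact (integrableOn_const hAfin).indicator hF.measurableSet
          · by_cases hx : x ∈ F
            · simp [hx, hgF hx]
            · simp [hx, (hg01 x).1]
  have hB_le : ∫ x in B, g x ∂μ ≤ μ.real (U \ S) := by
    calc ∫ x in B, g x ∂μ ≤ ∫ x in B, (U \ S).indicator 1 x ∂μ := by
          refine setIntegral_mono_on (g.integrableOn μ hBfin) ?_ hB fun x hxB => ?_
          · exact (integrableOn_const hBfin).indicator (hU.measurableSet.diff hS)
          · by_cases hx : x ∈ U
            · simp [hx, hxB, (hg01 x).2, S]
            · simp [hx, hgU hx]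
      _ ≤ μ.real (U \ S) := by
          rw [integral_indicator_one (hU.measurableSet.diff hS),
            measureReal_restrict_apply (hU.measurableSet.diff hS)]
          exact measureReal_mono inter_subset_left (measure_ne_top_of_subset sdiff_subset hUfin.ne)
  have hS_le : μ.real S ≤ μ.real F + ε := by
    have := ENNReal.toReal_le_of_le_ofReal hε.le hSF.le
    rw [← Measure.real, measureReal_sdiff hFS hF.measurableSet hSfin] at this
    linarith
  have hUS_le : μ.real (U \ S) ≤ ε := ENNReal.toReal_le_of_le_ofReal hε.le hUS.le
  linarith

theorem measureReal_symmDiff_le_norm_setIntegralCLM_sub (hA : MeasurableSet A)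
    (hB : MeasurableSet B) (hAfin : μ A ≠ ∞) (hBfin : μ B ≠ ∞) :
    μ.real (A ∆ B) ≤ ‖setIntegralCLM μ hAfin - setIntegralCLM μ hBfin‖ := by
  refine le_of_forall_pos_le_add fun ε hε => ?_
  obtain ⟨g₁, hg₁, h₁⟩ :=
    exists_measureReal_sdiff_le_setIntegral_sub hA hB hAfin hBfin (div_pos hε four_pos)
  obtain ⟨g₂, hg₂, h₂⟩ :=
    exists_measureReal_sdiff_le_setIntegral_sub hB hA hBfin hAfin (div_pos hε four_pos)
  have hg : ‖g₁ - g₂‖ ≤ 1 := by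
    refine (norm_le zero_le_one).2 fun x => ?_
    rw [BoundedContinuousFunction.sub_apply, Real.norm_eq_abs, abs_le]
    constructor <;> linarith [(hg₁ x).1, (hg₁ x).2, (hg₂ x).1, (hg₂ x).2]
  set Λ := setIntegralCLM μ hAfin - setIntegralCLM μ hBfin
  calc μ.real (A ∆ B) = μ.real (A \ B) + μ.real (B \ A) := measureReal_symmDiff_eq hA hB
    _ ≤ Λ (g₁ - g₂) + ε := by
      simp only [Λ, map_sub, _root_.sub_apply, setIntegralCLM_apply]
      linarith
    _ ≤ ‖Λ‖ + ε := by
      gcongr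
      calc Λ (g₁ - g₂) ≤ ‖Λ (g₁ - g₂)‖ := Real.le_norm_self _
        _ ≤ ‖Λ‖ * ‖g₁ - g₂‖ := Λ.le_opNorm _
        _ ≤ ‖Λ‖ := mul_le_of_le_one_right (norm_nonneg Λ) hg

end Urysohn

theorem exists_norm_sub_le_mul_of_tendsto {𝕜 E F : Type*} [NontriviallyNormedField 𝕜]
    [NormedAddCommGroup E] [NormedSpace 𝕜 E] [CompleteSpace E] [NormedAddCommGroup F]
    [NormedSpace 𝕜 F] {Λ : ℕ → E →L[𝕜] F} {Λ₀ : E →L[𝕜] F} {t : ℕ → 𝕜} (ht : ∀ k, t k ≠ 0)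
    (h : ∀ x, ∃ L, Tendsto (fun k => (t k)⁻¹ • (Λ k x - Λ₀ x)) atTop (𝓝 L)) :
    ∃ C, ∀ k, ‖Λ k - Λ₀‖ ≤ C * ‖t k‖ := by
  obtain ⟨C, hC⟩ := banach_steinhaus (g := fun k => (t k)⁻¹ • (Λ k - Λ₀)) fun x => by
    obtain ⟨L, hL⟩ := h x
    obtain ⟨C, hC⟩ := hL.norm.bddAbove_range
    exact ⟨C, fun k => hC ⟨k, rfl⟩⟩
  refine ⟨C, fun k => ?_⟩
  have := hC k
  rwa [norm_smul, norm_inv, inv_mul_le_iff₀ (norm_pos_iff.2 (ht k)), mul_comm] at this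

theorem exists_eventually_measureReal_symmDiff_le_mul {X : Type*} [TopologicalSpace X]
    [NormalSpace X] [MeasurableSpace X] [BorelSpace X] {μ : Measure X} [μ.WeaklyRegular]
    {K : ℝ → Set X} (hK : ∀ᶠ t in 𝓝[≥] 0, MeasurableSet (K t) ∧ μ (K t) ≠ ∞)
    (hdiff : ∀ f : X →ᵇ ℝ, ∃ L, Tendsto (fun t => ((∫ x in K t, f x ∂μ) - ∫ x in K 0, f x ∂μ) / t)
      (𝓝[>] 0) (𝓝 L)) :
    ∃ C, ∀ᶠ t in 𝓝[>] 0, μ.real (K t ∆ K 0) ≤ C * t := by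
  obtain ⟨hK₀, hK₀fin⟩ := hK.self_of_nhdsWithin self_mem_Ici
  by_contra! hfreq
  have hseq : ∀ k : ℕ, ∃ t, (t ∈ Ioo (0 : ℝ) (1 / (k + 1)) ∧
      MeasurableSet (K t) ∧ μ (K t) ≠ ∞) ∧ k * t < μ.real (K t ∆ K 0) := fun k =>
    ((hfreq k).and_eventually (Eventually.and (Ioo_mem_nhdsGT (by positivity))
      (hK.filter_mono (nhdsWithin_mono _ Ioi_subset_Ici_self)))).exists.imp fun _ h => ⟨h.2, h.1⟩
  choose t ht hlt using hseq
  have htendsto : Tendsto t atTop (𝓝[>] 0) :=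
    tendsto_nhdsWithin_of_tendsto_nhds_of_eventually_within _
      (tendsto_of_tendsto_of_tendsto_of_le_of_le tendsto_const_nhds
        tendsto_one_div_add_atTop_nhds_zero_nat (fun k => (ht k).1.1.le) fun k => (ht k).1.2.le)
      (Eventually.of_forall fun k => (ht k).1.1)
  obtain ⟨C, hC⟩ := exists_norm_sub_le_mul_of_tendsto (Λ := fun k => setIntegralCLM μ (ht k).2.2)
    (Λ₀ := setIntegralCLM μ hK₀fin) (fun k => (ht k).1.1.ne') fun f => by
      obtain ⟨L, hL⟩ := hdiff f
      exact ⟨L, by simpa [Function.comp_def, div_eq_inv_mul] using hL.comp htendsto⟩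
  obtain ⟨k, hk⟩ := exists_nat_gt C
  have := calc k * t k < μ.real (K (t k) ∆ K 0) := hlt k
    _ ≤ ‖setIntegralCLM μ (ht k).2.2 - setIntegralCLM μ hK₀fin‖ :=
      measureReal_symmDiff_le_norm_setIntegralCLM_sub (ht k).2.1 hK₀ _ _
    _ ≤ C * t k := by simpa [abs_of_pos (ht k).1.1] using hC k
  linarith [mul_lt_mul_of_pos_right hk (ht k).1.1]

theorem tendsto_measure_symmDiff_of_measureReal_le_mul {X : Type*} [MeasurableSpace X]
    {μ : Measure X} {K : ℝ → Set X} {C : ℝ} (hK : ∀ᶠ t in 𝓝[≥] 0, μ (K t) ≠ ∞)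
    (hC : ∀ᶠ t in 𝓝[>] 0, μ.real (K t ∆ K 0) ≤ C * t) :
    Tendsto (fun t => μ (K t ∆ K 0)) (𝓝[>] 0) (𝓝 0) := by
  have hfin : ∀ᶠ t in 𝓝[>] 0, μ (K t ∆ K 0) ≠ ∞ :=
    (hK.filter_mono (nhdsWithin_mono _ Ioi_subset_Ici_self)).mono fun _ ht =>
      measure_symmDiff_ne_top ht (hK.self_of_nhdsWithin self_mem_Ici)
  have hCt : Tendsto (fun t : ℝ => C * t) (𝓝[>] 0) (𝓝 0) :=
    tendsto_nhdsWithin_of_tendsto_nhds (by simpa using (continuous_const_mul C).tendsto 0)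
  have hreal : Tendsto (fun t => μ.real (K t ∆ K 0)) (𝓝[>] 0) (𝓝 0) :=
    tendsto_of_tendsto_of_tendsto_of_le_of_le' tendsto_const_nhds hCt
      (Eventually.of_forall fun _ => measureReal_nonneg) hC
  simpa using (ENNReal.tendsto_ofReal hreal).congr' (hfin.mono fun _ => ENNReal.ofReal_toReal)

theorem stmt14 (n : ℕ) (K : ℝ → Set (EuclideanSpace ℝ (Fin n)))
    (hbody : ∀ t ∈ Set.Icc (0 : ℝ) 1,
      IsCompact (K t) ∧ Convex ℝ (K t) ∧ (interior (K t)).Nonempty)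
    (hdiff : ∀ f : EuclideanSpace ℝ (Fin n) → ℝ, Continuous f → ∃ L : ℝ,
      Tendsto (fun t => ((∫ x in K t, f x) - ∫ x in K 0, f x) / t)
        (nhdsWithin 0 (Set.Ioi 0)) (nhds L)) :
    (∃ C : ℝ, ∀ᶠ t in nhdsWithin (0 : ℝ) (Set.Ioi 0),
        (volume (symmDiff (K t) (K 0))).toReal ≤ C * t) ∧
      Tendsto (fun t => volume (symmDiff (K t) (K 0)))
        (nhdsWithin (0 : ℝ) (Set.Ioi 0)) (nhds 0) := by
  have hK : ∀ᶠ t in 𝓝[≥] (0 : ℝ), MeasurableSet (K t) ∧ volume (K t) ≠ ∞ := by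
    filter_upwards [Icc_mem_nhdsGE zero_lt_one] with t ht
    exact ⟨(hbody t ht).1.measurableSet, (hbody t ht).1.measure_lt_top.ne⟩
  obtain ⟨C, hC⟩ := exists_eventually_measureReal_symmDiff_le_mul hK fun f => hdiff f f.continuous
  exact ⟨⟨C, hC⟩, tendsto_measure_symmDiff_of_measureReal_le_mul (hK.mono fun _ h => h.2) hC⟩
end

section
/- Let P ⊆ ℝⁿ be a compact convex polytope and α ∈ (0,1]. Let f : relint P → [0,∞) be an integrable function such that f^α is convex. Then for every ε > 0 there exists a piecewise affine convex function g : relint P → ℝ (a finite maximum of affine functionals, truncated at 0 when α < 1) such that ∫_{relint P} |f(x) − g(x)^{1/α}| dx < ε. -/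
/-
The intrinsic interior `s` of `P` is relatively open in the affine span `A` of `P`, so composing
`f ^ α` with the orthogonal projection onto `A` extends it to a convex function on an open set.
Supporting affine functionals of this extension at finitely many points, chosen by compactness,
approximate `f ^ α` uniformly from below on a compact `K ⊆ s`, and by inner regularity `K` can be
chosen to carry all of `∫ f` up to `ε / 2`. Taking also the maximum with `0`, the resulting `g`
satisfies `0 ≤ g ≤ f ^ α` on `s`, so `|f - g ^ (1 / α)| ≤ f` off `K`, while on `K` the error is
uniformly small by uniform continuity of `t ↦ t ^ (1 / α)` on bounded intervals. Compact subsets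
of `A` have finite `dim A`-dimensional Hausdorff measure, as `A` is isometric to `A.direction`.
-/

open MeasureTheory Set Topology Module

section ConvexApproximation

variable {E : Type*} [NormedAddCommGroup E] [NormedSpace ℝ E] {U : Set E} {Φ : E → ℝ}

theorem ConvexOn.exists_supporting_affineMap (hU : IsOpen U) (hΦ : ConvexOn ℝ U Φ)
    (hcont : ContinuousOn Φ U) {x : E} (hx : x ∈ U) :
    ∃ h : E →ᵃ[ℝ] ℝ, h x = Φ x ∧ ∀ y ∈ U, h y ≤ Φ y := by
  set S : Set (E × ℝ) := {p | p.1 ∈ U ∧ Φ p.1 < p.2}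
  have hS : IsOpen S := by
    have hc : ContinuousOn (fun p : E × ℝ => p.2 - Φ p.1) (U ×ˢ univ) :=
      continuousOn_snd.sub (hcont.comp continuousOn_fst fun p hp => hp.1)
    convert hc.isOpen_inter_preimage (hU.prod isOpen_univ) (isOpen_Ioi (a := 0)) using 1
    ext p
    simp [S]
  obtain ⟨ℓ, hℓ⟩ := geometric_hahn_banach_open_point hΦ.convex_strict_epigraph hS
    (x := (x, Φ x)) fun h => lt_irrefl _ h.2
  set a : E →L[ℝ] ℝ := ℓ.comp (.inl ℝ E ℝ)
  set c := ℓ (0, 1)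
  have hℓ_apply (y : E) (t : ℝ) : ℓ (y, t) = a y + t * c := by
    rw [show ((y, t) : E × ℝ) = (y, 0) + t • (0, 1) by simp, map_add, map_smul, smul_eq_mul]
    rfl
  have hsep (y : E) (hy : y ∈ U) (η : ℝ) (hη : 0 < η) :
      a y + (Φ y + η) * c < a x + Φ x * c := by
    simpa only [hℓ_apply] using hℓ (y, Φ y + η) ⟨hy, by linarith⟩
  -- the separating hyperplane is not vertical
  have hc : c < 0 := by linarith [hsep x hx 1 one_pos]
  have hle (y : E) (hy : y ∈ U) : a y + Φ y * c ≤ a x + Φ x * c := by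
    refine le_of_forall_pos_lt_add fun η hη => ?_
    have h := hsep y hy (η / -c) (div_pos hη (neg_pos.2 hc))
    rw [add_mul, div_mul_eq_mul_div, div_neg, mul_div_cancel_right₀ _ hc.ne] at h
    linarith
  let h : E →ᵃ[ℝ] ℝ :=
    AffineMap.const ℝ E (Φ x) + c⁻¹ • (AffineMap.const ℝ E (a x) - (a : E →ₗ[ℝ] ℝ).toAffineMap)
  have hh (y : E) : h y = Φ x + (a x - a y) / c := by
    rw [div_eq_inv_mul]
    rfl
  refine ⟨h, by rw [hh, sub_self, zero_div, add_zero], fun y hy => ?_⟩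
  rw [hh, ← le_sub_iff_add_le', div_le_iff_of_neg hc]
  linarith [hle y hy]

variable [FiniteDimensional ℝ E] {K : Set E} {δ : ℝ}

theorem ConvexOn.exists_finset_affineMap_minorant_approx (hU : IsOpen U) (hΦ : ConvexOn ℝ U Φ)
    (hK : IsCompact K) (hKU : K ⊆ U) (hδ : 0 < δ) :
    ∃ H : Finset (E →ᵃ[ℝ] ℝ),
      (∀ h ∈ H, ∀ y ∈ U, h y ≤ Φ y) ∧ ∀ x ∈ K, ∃ h ∈ H, Φ x - δ < h x := by
  classical
  have hcont := hΦ.continuousOn hU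
  choose! h hhx hhU using fun x (hx : x ∈ U) => hΦ.exists_supporting_affineMap hU hcont hx
  have hnhds (x : E) (hxK : x ∈ K) : {y | Φ y - δ < h x y} ∈ 𝓝 x := by
    have hxU := hKU hxK
    refine ((hcont.continuousAt (hU.mem_nhds hxU)).sub continuousAt_const).eventually_lt
      (h x).continuous_of_finiteDimensional.continuousAt ?_
    simpa [hhx x hxU] using sub_lt_self (Φ x) hδ
  obtain ⟨t, htK, hcover⟩ := hK.elim_nhds_subcover _ hnhds
  refine ⟨t.image h, Finset.forall_mem_image.2 fun x hx => hhU x (hKU (htK x hx)),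
    fun x hx => ?_⟩
  obtain ⟨z, hz, hxz⟩ := mem_iUnion₂.1 (hcover hx)
  exact ⟨h z, Finset.mem_image_of_mem h hz, hxz⟩

theorem ConvexOn.exists_finset_sup'_affineMap_approx (hU : IsOpen U) (hΦ : ConvexOn ℝ U Φ)
    (hK : IsCompact K) (hKU : K ⊆ U) (hδ : 0 < δ) :
    ∃ (H : Finset (E →ᵃ[ℝ] ℝ)) (hne : H.Nonempty), (∀ x, 0 ≤ H.sup' hne (· x)) ∧
      (∀ y ∈ U, H.sup' hne (· y) ≤ max (Φ y) 0) ∧ ∀ x ∈ K, Φ x - δ < H.sup' hne (· x) := by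
  classical
  obtain ⟨H, hHU, hHK⟩ := hΦ.exists_finset_affineMap_minorant_approx hU hK hKU hδ
  refine ⟨insert 0 H, Finset.insert_nonempty 0 H, fun x => ?_, fun y hy => ?_, fun x hx => ?_⟩
  · exact Finset.le_sup'_of_le _ (Finset.mem_insert_self 0 H) le_rfl
  · refine Finset.sup'_le _ _ fun h hh => ?_
    rcases Finset.mem_insert.1 hh with rfl | hh
    · exact le_max_right _ _
    · exact (hHU h hh y hy).trans (le_max_left _ _)
  · obtain ⟨h, hh, hlt⟩ := hHK x hx
    exact hlt.trans_le (Finset.le_sup'_of_le _ (Finset.mem_insert_of_mem hh) le_rfl)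

end ConvexApproximation

section IntrinsicInterior

theorem exists_isOpen_inter_affineSpan_eq_intrinsicInterior {𝕜 V P : Type*} [Ring 𝕜]
    [AddCommGroup V] [Module 𝕜 V] [TopologicalSpace P] [AddTorsor V P] (s : Set P) :
    ∃ U, IsOpen U ∧ U ∩ affineSpan 𝕜 s = intrinsicInterior 𝕜 s := by
  obtain ⟨U, hU, hUs⟩ :=
    isOpen_induced_iff.1 (isOpen_interior (s := ((↑) ⁻¹' s : Set (affineSpan 𝕜 s))))
  refine ⟨U, hU, ?_⟩
  rw [intrinsicInterior, ← hUs, image_preimage_eq_range_inter, Subtype.range_coe_subtype,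
    inter_comm]
  rfl

variable {E : Type*} [NormedAddCommGroup E]

theorem measurableSet_intrinsicInterior [NormedSpace ℝ E] [FiniteDimensional ℝ E]
    [MeasurableSpace E] [BorelSpace E] (s : Set E) : MeasurableSet (intrinsicInterior ℝ s) := by
  obtain ⟨U, hU, hUs⟩ := exists_isOpen_inter_affineSpan_eq_intrinsicInterior (𝕜 := ℝ) s
  rw [← hUs]
  exact hU.measurableSet.inter (affineSpan ℝ s).closed_of_finiteDimensional.measurableSet

theorem ConvexOn.exists_isOpen_convexOn_eqOn_intrinsicInterior [InnerProductSpace ℝ E]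
    [FiniteDimensional ℝ E] {P : Set E} {Φ : E → ℝ}
    (hΦ : ConvexOn ℝ (intrinsicInterior ℝ P) Φ) :
    ∃ U Ψ, IsOpen U ∧ intrinsicInterior ℝ P ⊆ U ∧ ConvexOn ℝ U Ψ ∧
      EqOn Ψ Φ (intrinsicInterior ℝ P) := by
  rcases (intrinsicInterior ℝ P).eq_empty_or_nonempty with hs | ⟨x₀, hx₀⟩
  · exact ⟨∅, Φ, isOpen_empty, hs.le, hs ▸ hΦ, hs ▸ eqOn_empty _ _⟩
  set A := affineSpan ℝ P
  have : Nonempty A := ⟨⟨x₀, subset_affineSpan ℝ P (intrinsicInterior_subset hx₀)⟩⟩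
  set p : E →ᵃ[ℝ] E := A.subtype.comp (EuclideanGeometry.orthogonalProjection A).toAffineMap
  have hp (x : E) (hx : x ∈ intrinsicInterior ℝ P) : p x = x :=
    EuclideanGeometry.orthogonalProjection_eq_self_iff.2
      (subset_affineSpan ℝ P (intrinsicInterior_subset hx))
  obtain ⟨U, hU, hUs⟩ := exists_isOpen_inter_affineSpan_eq_intrinsicInterior (𝕜 := ℝ) P
  have hpre : p ⁻¹' intrinsicInterior ℝ P = p ⁻¹' U := by
    rw [← hUs, preimage_inter, inter_eq_left]
    exact fun x _ => EuclideanGeometry.orthogonalProjection_mem (s := A) x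
  refine ⟨p ⁻¹' intrinsicInterior ℝ P, Φ ∘ p, ?_, fun x hx => ?_, hΦ.comp_affineMap p,
    fun x hx => congrArg Φ (hp x hx)⟩
  · rw [hpre]
    exact hU.preimage (EuclideanGeometry.orthogonalProjection A).continuous.subtype_val
  · rwa [mem_preimage, hp x hx]

theorem AffineSubspace.hausdorffMeasure_lt_top_of_isCompact [NormedSpace ℝ E]
    [MeasurableSpace E] [BorelSpace E] (A : AffineSubspace ℝ E) [FiniteDimensional ℝ A.direction]
    {K : Set E} (hK : IsCompact K) (hKA : K ⊆ A) : μH[finrank ℝ A.direction] K < ⊤ := by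
  rcases K.eq_empty_or_nonempty with rfl | ⟨x₀, hx₀⟩
  · simp
  set F : A.direction → E := fun v => (v : E) + x₀
  have hF : Isometry F := (IsometryEquiv.addRight x₀).isometry.comp isometry_subtype_coe
  have hKF : K ⊆ range F := fun x hx =>
    ⟨⟨x - x₀, A.vsub_mem_direction (hKA hx) (hKA hx₀)⟩, sub_add_cancel x x₀⟩
  rw [← inter_eq_left.2 hKF, ← hF.hausdorffMeasure_preimage (.inl (Nat.cast_nonneg _))]
  exact (hF.isClosedEmbedding.isCompact_preimage hK).measure_lt_top

end IntrinsicInterior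

section Integral

variable {X : Type*} [MeasurableSpace X] {μ : Measure X} {s : Set X}

theorem MeasureTheory.IntegrableOn.exists_isCompact_setIntegral_norm_sdiff_lt [TopologicalSpace X]
    [PolishSpace X] [BorelSpace X] {F : Type*} [NormedAddCommGroup F] {f : X → F}
    (hs : MeasurableSet s) (hf : IntegrableOn f s μ) {η : ℝ} (hη : 0 < η) :
    ∃ K ⊆ s, IsCompact K ∧ ∫ x in s \ K, ‖f x‖ ∂μ < η := by
  set ν := μ.withDensity fun x => ‖f x‖ₑ
  have hνs : ν s ≠ ⊤ := by
    rw [withDensity_apply _ hs]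
    exact hf.2.ne
  obtain ⟨K, hKs, hK, hνK⟩ := hs.exists_isCompact_sdiff_lt hνs (ENNReal.ofReal_pos.2 hη).ne'
  refine ⟨K, hKs, hK, ?_⟩
  rw [withDensity_apply _ (hs.diff hK.measurableSet)] at hνK
  rw [integral_norm_eq_lintegral_enorm (hf.mono_set sdiff_subset).1]
  exact ENNReal.toReal_lt_of_lt_ofReal hνK

theorem setIntegral_abs_sub_le {K : Set X} {f u : X → ℝ} {η : ℝ} (hs : MeasurableSet s)
    (hK : MeasurableSet K) (hKs : K ⊆ s) (hμK : μ K < ⊤) (hf : IntegrableOn f s μ)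
    (hu : AEStronglyMeasurable u (μ.restrict s)) (hu0 : ∀ x ∈ s, 0 ≤ u x)
    (huf : ∀ x ∈ s, u x ≤ f x) (hη : ∀ x ∈ K, |f x - u x| ≤ η) :
    ∫ x in s, |f x - u x| ∂μ ≤ η * μ.real K + ∫ x in s \ K, ‖f x‖ ∂μ := by
  have hu_int : IntegrableOn u s μ := hf.norm.mono' hu <| (ae_restrict_iff' hs).2 <|
    ae_of_all _ fun x hx => by
      rw [Real.norm_eq_abs, abs_of_nonneg (hu0 x hx)]
      exact (huf x hx).trans (le_abs_self _)
  have hd : IntegrableOn (fun x => |f x - u x|) s μ := (hf.sub hu_int).abs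
  have hKpart : ∫ x in K, |f x - u x| ∂μ ≤ η * μ.real K := by
    refine (le_abs_self _).trans ?_
    refine norm_setIntegral_le_of_norm_le_const (f := fun x => |f x - u x|) hμK fun x hx => ?_
    rw [Real.norm_eq_abs, abs_abs]
    exact hη x hx
  have htail : ∫ x in s \ K, |f x - u x| ∂μ ≤ ∫ x in s \ K, ‖f x‖ ∂μ := by
    refine setIntegral_mono_on (hd.mono_set sdiff_subset) (hf.mono_set sdiff_subset).norm
      (hs.diff hK) fun x hx => ?_
    rw [Real.norm_eq_abs]
    exact abs_le.2 ⟨by linarith [abs_nonneg (f x), huf x hx.1],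
      by linarith [le_abs_self (f x), hu0 x hx.1]⟩
  calc ∫ x in s, |f x - u x| ∂μ
      = ∫ x in K, |f x - u x| ∂μ + ∫ x in s \ K, |f x - u x| ∂μ := by
        rw [← integral_inter_add_sdiff hK hd, inter_eq_right.2 hKs]
    _ ≤ _ := add_le_add hKpart htail

end Integral

theorem exists_pos_abs_rpow_sub_rpow_lt {p : ℝ} (hp : 0 ≤ p) (M : ℝ) {η : ℝ} (hη : 0 < η) :
    ∃ δ > 0, ∀ a b : ℝ, 0 ≤ b → b ≤ a → a ≤ M → a - δ < b → |a ^ p - b ^ p| < η := by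
  obtain ⟨δ, hδ, h⟩ := Metric.uniformContinuousOn_iff.1
    ((isCompact_Icc (a := 0) (b := M)).uniformContinuousOn_of_continuous
      (Real.continuous_rpow_const hp).continuousOn) η hη
  refine ⟨δ, hδ, fun a b hb hba haM hab => ?_⟩
  have hdist : dist a b < δ := by
    rw [Real.dist_eq, abs_of_nonneg (sub_nonneg.2 hba)]
    linarith
  simpa only [Real.dist_eq] using h a ⟨hb.trans hba, haM⟩ b ⟨hb, hba.trans haM⟩ hdist

theorem exists_finset_sup'_affineMap_setIntegral_abs_sub_rpow_lt {E : Type*}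
    [NormedAddCommGroup E] [NormedSpace ℝ E] [FiniteDimensional ℝ E] [MeasurableSpace E]
    [BorelSpace E] {μ : Measure E} {s U : Set E} {Ψ f : E → ℝ} {α ε : ℝ} (hα : 0 < α)
    (hs : MeasurableSet s) (hμ : ∀ K ⊆ s, IsCompact K → μ K < ⊤) (hU : IsOpen U) (hsU : s ⊆ U)
    (hΨ : ConvexOn ℝ U Ψ) (hΨs : EqOn Ψ (fun x => f x ^ α) s) (hf0 : ∀ x ∈ s, 0 ≤ f x)
    (hf : IntegrableOn f s μ) (hε : 0 < ε) :
    ∃ (H : Finset (E →ᵃ[ℝ] ℝ)) (hne : H.Nonempty), (∀ x, 0 ≤ H.sup' hne (· x)) ∧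
      ∫ x in s, |f x - H.sup' hne (· x) ^ (1 / α)| ∂μ < ε := by
  obtain ⟨K, hKs, hK, htail⟩ := hf.exists_isCompact_setIntegral_norm_sdiff_lt hs (half_pos hε)
  obtain ⟨M, hM⟩ := hK.bddAbove_image ((hΨ.continuousOn hU).mono (hKs.trans hsU))
  set η := ε / 2 / (μ.real K + 1)
  have hα' : 0 < 1 / α := one_div_pos.2 hα
  obtain ⟨δ, hδ, hrpow⟩ := exists_pos_abs_rpow_sub_rpow_lt hα'.le M (by positivity : 0 < η)
  obtain ⟨H, hne, hg0, hgΨ, hgK⟩ :=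
    hΨ.exists_finset_sup'_affineMap_approx hU hK (hKs.trans hsU) hδ
  have hfα (x) (hx : x ∈ s) : (f x ^ α) ^ (1 / α) = f x := by
    rw [one_div, Real.rpow_rpow_inv (hf0 x hx) hα.ne']
  have hgf (x) (hx : x ∈ s) : H.sup' hne (· x) ≤ f x ^ α := by
    calc _ ≤ max (Ψ x) 0 := hgΨ x (hsU hx)
      _ = f x ^ α := by rw [hΨs hx, max_eq_left (Real.rpow_nonneg (hf0 x hx) α)]
  have hclose (x) (hx : x ∈ K) : |f x - H.sup' hne (· x) ^ (1 / α)| ≤ η := by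
    have hΨx : Ψ x = f x ^ α := hΨs (hKs hx)
    rw [← hfα x (hKs hx)]
    refine (hrpow _ _ (hg0 x) (hgf x (hKs hx)) (hΨx ▸ hM (mem_image_of_mem Ψ hx)) ?_).le
    linarith [hgK x hx]
  refine ⟨H, hne, hg0, ?_⟩
  calc _ ≤ η * μ.real K + ∫ x in s \ K, ‖f x‖ ∂μ :=
        setIntegral_abs_sub_le hs hK.measurableSet hKs (hμ K hKs hK) hf
          ((Real.continuous_rpow_const hα'.le).comp (Continuous.finset_sup'_apply hne
            fun h _ => h.continuous_of_finiteDimensional)).aestronglyMeasurable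
          (fun x _ => Real.rpow_nonneg (hg0 x) _)
          (fun x hx => hfα x hx ▸ Real.rpow_le_rpow (hg0 x) (hgf x hx) hα'.le) hclose
    _ < ε / 2 + ε / 2 := by
        refine add_lt_add_of_le_of_lt ?_ htail
        rw [div_mul_eq_mul_div, div_le_iff₀ (by positivity)]
        nlinarith [measureReal_nonneg (μ := μ) (s := K)]
    _ = ε := add_halves ε

theorem stmt17_general (n : ℕ) (P : Set (EuclideanSpace ℝ (Fin n)))
    (α : ℝ) (hα : α ∈ Set.Ioc (0 : ℝ) 1)
    (f : EuclideanSpace ℝ (Fin n) → ℝ)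
    (hf0 : ∀ x ∈ intrinsicInterior ℝ P, 0 ≤ f x)
    (hfconv : ConvexOn ℝ (intrinsicInterior ℝ P) (fun x => f x ^ α))
    (hint : IntegrableOn f (intrinsicInterior ℝ P)
      (μH[(Module.finrank ℝ (affineSpan ℝ P).direction : ℝ)]))
    (ε : ℝ) (hε : 0 < ε) :
    ∃ (H : Finset (EuclideanSpace ℝ (Fin n) →ᵃ[ℝ] ℝ)) (hne : H.Nonempty),
      (α < 1 → ∀ x ∈ intrinsicInterior ℝ P, 0 ≤ H.sup' hne (fun h => h x)) ∧
      (∫ x in intrinsicInterior ℝ P, |f x - (H.sup' hne (fun h => h x)) ^ (1 / α)|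
        ∂(μH[(Module.finrank ℝ (affineSpan ℝ P).direction : ℝ)])) < ε := by
  obtain ⟨U, Ψ, hU, hsU, hΨ, hΨs⟩ := hfconv.exists_isOpen_convexOn_eqOn_intrinsicInterior
  have hμ (K) (hKs : K ⊆ intrinsicInterior ℝ P) (hK : IsCompact K) :=
    (affineSpan ℝ P).hausdorffMeasure_lt_top_of_isCompact hK
      fun x hx => subset_affineSpan ℝ P (intrinsicInterior_subset (hKs hx))
  obtain ⟨H, hne, hg0, hlt⟩ := exists_finset_sup'_affineMap_setIntegral_abs_sub_rpow_lt hα.1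
    (measurableSet_intrinsicInterior P) hμ hU hsU hΨ hΨs hf0 hint hε
  exact ⟨H, hne, fun _ x _ => hg0 x, hlt⟩

theorem stmt17 (n : ℕ) (P : Set (EuclideanSpace ℝ (Fin n)))
    (hPpoly : ∃ S : Finset (EuclideanSpace ℝ (Fin n)), P = convexHull ℝ (S : Set _))
    (α : ℝ) (hα : α ∈ Set.Ioc (0 : ℝ) 1)
    (f : EuclideanSpace ℝ (Fin n) → ℝ)
    (hf0 : ∀ x ∈ intrinsicInterior ℝ P, 0 ≤ f x)
    (hfconv : ConvexOn ℝ (intrinsicInterior ℝ P) (fun x => f x ^ α))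
    (hint : IntegrableOn f (intrinsicInterior ℝ P)
      (μH[(Module.finrank ℝ (affineSpan ℝ P).direction : ℝ)]))
    (ε : ℝ) (hε : 0 < ε) :
    ∃ (H : Finset (EuclideanSpace ℝ (Fin n) →ᵃ[ℝ] ℝ)) (hne : H.Nonempty),
      (α < 1 → ∀ x ∈ intrinsicInterior ℝ P, 0 ≤ H.sup' hne (fun h => h x)) ∧
      (∫ x in intrinsicInterior ℝ P, |f x - (H.sup' hne (fun h => h x)) ^ (1 / α)|
        ∂(μH[(Module.finrank ℝ (affineSpan ℝ P).direction : ℝ)])) < ε :=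
  stmt17_general n P α hα f hf0 hfconv hint ε hε
end
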